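/- arXiv:1711.08328 — 6 statements merged into one kernel-verified Lean document; each statement's English description precedes it below -/
import Mathlib

section
/- Let 0 < r^{−2} ≤ a ≤ b, let J be a positive integer with 4^{J−1} ≥ b/a, set r₀ = 2^{−J}r, and let 𝐭∈S̄ satisfy π(B^{S̄}(𝐭,2r′)) ≤ exp[(3a/8)r′²]·π(B^{S̄}(𝐭,r′)) for all r′ ≥ r₀. Then ∫_{S̄∖B^{S̄}(𝐭,r)} exp[−a𝐡²(𝐭,𝐭′)]dπ(𝐭′) ≤ exp[(1−ar²)/4]·∫_{S̄} exp[−b𝐡²(𝐭,𝐭′)]dπ(𝐭′). -/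
open MeasureTheory Real Set
open scoped ENNReal

noncomputable section

/-- Squared Hellinger distance `h²(p·ν, q·ν) = (1/2)∫(√p−√q)² dν` between two densities
with respect to the reference measure `ν`. -/
def hellSq {X : Type*} [MeasurableSpace X] (ν : Measure X) (p q : X → ℝ) : ℝ :=
  (1 / 2) * ∫ x, (Real.sqrt (p x) - Real.sqrt (q x)) ^ 2 ∂ν

/-- Hellinger-type distance `𝐡` between `n`-tuples of densities:
`𝐡²(𝐭,𝐭′)=Σᵢ h²(tᵢ·μᵢ, tᵢ′·μᵢ)`. -/
def bH {n : ℕ} {𝒳 : Fin n → Type*} [∀ i, MeasurableSpace (𝒳 i)]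
    (μ : ∀ i, Measure (𝒳 i)) (t t' : ∀ i, 𝒳 i → ℝ) : ℝ :=
  Real.sqrt (∑ i, hellSq (μ i) (t i) (t' i))

lemma aux_E : (1.2812 : ℝ) ≤ Real.exp (1/4) := by
  have h4 : Real.exp (1/4) ^ 4 = Real.exp 1 := by
    rw [← Real.exp_nat_mul]; norm_num
  by_contra hc
  push_neg at hc
  have h2 := pow_le_pow_left₀ (le_of_lt (Real.exp_pos (1/4:ℝ))) hc.le 4
  rw [h4] at h2
  have := Real.exp_one_gt_d9
  norm_num at h2 ⊢
  linarith

lemma aux_core (E t : ℝ) (hE : (1.2812:ℝ) ≤ E) (ht : (4.42:ℝ) ≤ t) :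
    1 + t⁻¹ * (1 - (t^4)⁻¹)⁻¹ ≤ E := by
  have htpos : (0:ℝ) < t := by linarith
  have ht4 : (1:ℝ) < t^4 := by
    have := pow_le_pow_left₀ (by norm_num : (0:ℝ) ≤ 4.42) ht 4
    nlinarith
  have hne : t ≠ 0 := ne_of_gt htpos
  have hne4 : t^4 - 1 ≠ 0 := ne_of_gt (by linarith)
  have key : t^3 ≤ (E - 1) * (t^4 - 1) := by
    nlinarith [sq_nonneg (t - 4.42), pow_pos htpos 3, pow_pos htpos 4, sq_nonneg (t^2 - 4.42*t)]
  have heq : 1 + t⁻¹ * (1 - (t^4)⁻¹)⁻¹ = 1 + t^3 / (t^4 - 1) := by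
    have h1 : 1 - (t^4)⁻¹ = (t^4-1)/t^4 := by field_simp
    rw [h1, inv_div]
    field_simp
  rw [heq, ← sub_nonneg]
  have h1 : E - (1 + t^3/(t^4-1)) = ((E-1)*(t^4-1) - t^3) / (t^4-1) := by
    field_simp
    ring
  rw [h1]
  apply div_nonneg (by linarith) (by linarith)

lemma aux_real : 1 + Real.exp (-3/2) * (1 - Real.exp (-6))⁻¹ ≤ Real.exp (1/4) := by
  have hE := aux_E
  have ht : (4.42 : ℝ) ≤ Real.exp (1/4) ^ 6 := by
    calc (4.42:ℝ) ≤ 1.2812 ^ 6 := by norm_num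
    _ ≤ _ := pow_le_pow_left₀ (by norm_num) hE 6
  have h32 : Real.exp (-3/2) = (Real.exp (1/4) ^ 6)⁻¹ := by
    rw [← Real.exp_nat_mul, ← Real.exp_neg]; norm_num
  have h6 : Real.exp (-6) = ((Real.exp (1/4) ^ 6)^4)⁻¹ := by
    rw [← pow_mul, ← Real.exp_nat_mul, ← Real.exp_neg]; norm_num
  rw [h32, h6]
  exact aux_core _ _ hE ht

lemma aux_series : ∑' k : ℕ, ENNReal.ofReal (Real.exp (-((4:ℝ)^k - 1)/2)) ≤
    ENNReal.ofReal (Real.exp (1/4)) := by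
  rw [tsum_eq_zero_add' ENNReal.summable]
  have h0 : ENNReal.ofReal (Real.exp (-((4:ℝ)^(0:ℕ) - 1)/2)) = 1 := by
    norm_num
  rw [h0]
  have hshift : ∀ k : ℕ, ENNReal.ofReal (Real.exp (-((4:ℝ)^(k+1) - 1)/2)) ≤
      ENNReal.ofReal (Real.exp (-3/2)) * (ENNReal.ofReal (Real.exp (-6)))^k := by
    intro k
    rw [← ENNReal.ofReal_pow (le_of_lt (Real.exp_pos _)), ← Real.exp_nat_mul,
      ← ENNReal.ofReal_mul (le_of_lt (Real.exp_pos _)), ← Real.exp_add]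
    apply ENNReal.ofReal_le_ofReal
    apply Real.exp_le_exp.mpr
    have hb : 1 + (k:ℝ) * 3 ≤ (1+3)^k := one_add_mul_le_pow (by norm_num) k
    norm_num at hb
    have h4 : ((4:ℝ))^(k+1) = 4 * 4^k := by ring
    push_cast
    linarith
  have hsum : (∑' k : ℕ, ENNReal.ofReal (Real.exp (-((4:ℝ)^(k+1) - 1)/2))) ≤
      ENNReal.ofReal (Real.exp (-3/2) * (1 - Real.exp (-6))⁻¹) := by
    calc (∑' k : ℕ, ENNReal.ofReal (Real.exp (-((4:ℝ)^(k+1) - 1)/2)))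
        ≤ ∑' k : ℕ, ENNReal.ofReal (Real.exp (-3/2)) * (ENNReal.ofReal (Real.exp (-6)))^k :=
          ENNReal.tsum_le_tsum hshift
      _ = ENNReal.ofReal (Real.exp (-3/2)) * (1 - ENNReal.ofReal (Real.exp (-6)))⁻¹ := by
          rw [ENNReal.tsum_mul_left, ENNReal.tsum_geometric]
      _ = ENNReal.ofReal (Real.exp (-3/2) * (1 - Real.exp (-6))⁻¹) := by
          rw [← ENNReal.ofReal_one, ← ENNReal.ofReal_sub _ (le_of_lt (Real.exp_pos _)),
            ← ENNReal.ofReal_inv_of_pos (by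
              have : Real.exp (-6) < 1 := Real.exp_lt_one_iff.mpr (by norm_num)
              linarith),
            ← ENNReal.ofReal_mul (le_of_lt (Real.exp_pos _))]
  calc 1 + (∑' k : ℕ, ENNReal.ofReal (Real.exp (-((4:ℝ)^(k+1) - 1)/2)))
      ≤ 1 + ENNReal.ofReal (Real.exp (-3/2) * (1 - Real.exp (-6))⁻¹) := by
        exact add_le_add_right hsum 1
    _ = ENNReal.ofReal (1 + Real.exp (-3/2) * (1 - Real.exp (-6))⁻¹) := by
        rw [ENNReal.ofReal_add (by norm_num) (mul_nonneg (le_of_lt (Real.exp_pos _))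
          (inv_nonneg.mpr (by nlinarith [Real.exp_lt_one_iff.mpr (by norm_num : (-6:ℝ) < 0)]))),
          ENNReal.ofReal_one]
    _ ≤ ENNReal.ofReal (Real.exp (1/4)) := ENNReal.ofReal_le_ofReal aux_real

lemma aux_tsum (c : ℝ) (hc : 1 ≤ c) :
    ∑' k : ℕ, ENNReal.ofReal (Real.exp (-(c/2) * 4^k)) ≤
      ENNReal.ofReal (Real.exp (1/4 - c/2)) := by
  have h1 : ∀ k : ℕ, ENNReal.ofReal (Real.exp (-(c/2) * 4^k)) ≤
      ENNReal.ofReal (Real.exp (-c/2)) * ENNReal.ofReal (Real.exp (-((4:ℝ)^k - 1)/2)) := by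
    intro k
    rw [← ENNReal.ofReal_mul (le_of_lt (Real.exp_pos _)), ← Real.exp_add]
    apply ENNReal.ofReal_le_ofReal
    apply Real.exp_le_exp.mpr
    have h4 : (1:ℝ) ≤ 4^k := one_le_pow₀ (by norm_num : (1:ℝ) ≤ 4)
    nlinarith
  calc (∑' k : ℕ, ENNReal.ofReal (Real.exp (-(c/2) * 4^k)))
      ≤ ∑' k : ℕ, ENNReal.ofReal (Real.exp (-c/2)) * ENNReal.ofReal (Real.exp (-((4:ℝ)^k - 1)/2)) :=
        ENNReal.tsum_le_tsum h1
    _ = ENNReal.ofReal (Real.exp (-c/2)) * ∑' k : ℕ, ENNReal.ofReal (Real.exp (-((4:ℝ)^k - 1)/2)) :=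
        ENNReal.tsum_mul_left
    _ ≤ ENNReal.ofReal (Real.exp (-c/2)) * ENNReal.ofReal (Real.exp (1/4)) :=
        mul_le_mul_right aux_series _
    _ = ENNReal.ofReal (Real.exp (1/4 - c/2)) := by
        rw [← ENNReal.ofReal_mul (le_of_lt (Real.exp_pos _)), ← Real.exp_add]
        ring_nf

theorem statement_2
    {n : ℕ} {𝒳 : Fin n → Type*} [∀ i, MeasurableSpace (𝒳 i)]
    (μ : ∀ i, Measure (𝒳 i))
    [mS : MeasurableSpace (∀ i, 𝒳 i → ℝ)]
    (Sbar : Set (∀ i, 𝒳 i → ℝ))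
    -- the prior on (S̄,𝒮)
    (pr : Measure (∀ i, 𝒳 i → ℝ)) [IsProbabilityMeasure pr] (hpr : pr Sbarᶜ = 0)
    (a b r : ℝ) (hr : 0 < r) (hra : 1 / r ^ 2 ≤ a) (hab : a ≤ b)
    (J : ℕ) (hJ : 1 ≤ J) (hJab : b / a ≤ 4 ^ (J - 1))
    (t : ∀ i, 𝒳 i → ℝ) (ht : t ∈ Sbar)
    -- 𝐭′ ↦ 𝐡(𝐭,𝐭′) is 𝒮-measurable
    (hmeas : Measurable fun u => bH μ t u)
    -- doubling condition for radii r′ ≥ r₀ = 2^{−J} r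
    (hdouble : ∀ r' : ℝ, (2 : ℝ) ^ (-(J : ℤ)) * r ≤ r' →
      pr {u ∈ Sbar | bH μ t u ≤ 2 * r'} ≤
        ENNReal.ofReal (Real.exp (3 * a / 8 * r' ^ 2)) * pr {u ∈ Sbar | bH μ t u ≤ r'}) :
    ∫⁻ u in {u ∈ Sbar | r < bH μ t u},
        ENNReal.ofReal (Real.exp (-a * bH μ t u ^ 2)) ∂pr ≤
      ENNReal.ofReal (Real.exp ((1 - a * r ^ 2) / 4)) *
        ∫⁻ u in Sbar, ENNReal.ofReal (Real.exp (-b * bH μ t u ^ 2)) ∂pr := by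
  classical
  have hH0 : ∀ u, 0 ≤ bH μ t u := fun u => Real.sqrt_nonneg _
  have ha : 0 < a := lt_of_lt_of_le (by positivity) hra
  have hb : 0 < b := lt_of_lt_of_le ha hab
  have hc1 : 1 ≤ a * r^2 := by
    rw [div_le_iff₀ (by positivity)] at hra
    linarith
  set r0 : ℝ := (2:ℝ)^(-(J:ℤ)) * r with hr0def
  have h2J : (0:ℝ) < (2:ℝ)^(J:ℕ) := by positivity
  have hr0eq : r0 = r / 2^(J:ℕ) := by
    rw [hr0def, zpow_neg, zpow_natCast]
    ring
  have hr0pos : 0 < r0 := by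
    rw [hr0eq]; positivity
  have h24 : ∀ m : ℕ, ((2:ℝ)^m)^2 = 4^m := by
    intro m
    rw [← pow_mul, mul_comm, pow_mul]
    norm_num
  have hr0sq : r0^2 * 4^(J:ℕ) = r^2 := by
    rw [hr0eq, div_pow, ← h24 J]
    field_simp
  -- measure of sets intersected with Sbar
  have hset : ∀ P : (∀ i, 𝒳 i → ℝ) → Prop,
      pr {u | u ∈ Sbar ∧ P u} = pr {u | P u} := by
    intro P
    apply le_antisymm (measure_mono (fun u hu => hu.2))
    calc pr {u | P u} ≤ pr ({u | u ∈ Sbar ∧ P u} ∪ Sbarᶜ) := by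
          apply measure_mono
          intro u hu
          by_cases h : u ∈ Sbar
          · exact Or.inl ⟨h, hu⟩
          · exact Or.inr h
      _ ≤ pr {u | u ∈ Sbar ∧ P u} + pr Sbarᶜ := measure_union_le _ _
      _ = pr {u | u ∈ Sbar ∧ P u} := by rw [hpr, add_zero]
  -- iterated doubling bound
  have hA : ∀ m : ℕ, pr {u | bH μ t u ≤ 2^m * r0} ≤
      ENNReal.ofReal (Real.exp (a/8 * (4^m * r0^2))) * pr {u | bH μ t u ≤ r0} := by
    intro m
    induction m with
    | zero =>
      rw [pow_zero, one_mul]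
      refine le_mul_of_one_le_left (by simp) ?_
      rw [ENNReal.one_le_ofReal]
      exact Real.one_le_exp (by positivity)
    | succ m ih =>
      have hge : (2:ℝ)^(-(J:ℤ)) * r ≤ 2^m * r0 := by
        rw [← hr0def]
        exact le_mul_of_one_le_left hr0pos.le (one_le_pow₀ (by norm_num : (1:ℝ) ≤ 2))
      have hstep := hdouble (2^m * r0) hge
      have e : (2:ℝ)^(m+1)*r0 = 2*(2^m*r0) := by ring
      have h2 : 3*a/8*((2:ℝ)^m*r0)^2 = 3*a/8*(4^m*r0^2) := by
        rw [mul_pow, h24]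
      calc pr {u | bH μ t u ≤ 2^(m+1) * r0}
          = pr {u | u ∈ Sbar ∧ bH μ t u ≤ 2 * (2^m * r0)} := by
            rw [e]; exact (hset _).symm
        _ ≤ ENNReal.ofReal (Real.exp (3*a/8*((2:ℝ)^m*r0)^2)) *
              pr {u | u ∈ Sbar ∧ bH μ t u ≤ 2^m * r0} := hstep
        _ ≤ ENNReal.ofReal (Real.exp (3*a/8*((2:ℝ)^m*r0)^2)) *
              (ENNReal.ofReal (Real.exp (a/8 * (4^m * r0^2))) * pr {u | bH μ t u ≤ r0}) :=
            mul_le_mul_right ((le_of_eq (hset _)).trans ih) _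
        _ = ENNReal.ofReal (Real.exp (a/8 * (4^(m+1) * r0^2))) * pr {u | bH μ t u ≤ r0} := by
            rw [← mul_assoc, ← ENNReal.ofReal_mul (le_of_lt (Real.exp_pos _)), ← Real.exp_add,
              h2]
            congr 2
            ring
  -- bound on big balls of radius 2^(k+1) r
  have hBr : ∀ k : ℕ, pr {u | bH μ t u ≤ 2^(k+1) * r} ≤
      ENNReal.ofReal (Real.exp (a/8 * (4^(k+1) * r^2))) * pr {u | bH μ t u ≤ r0} := by
    intro k
    have e1 : (2:ℝ)^(k+1) * r = 2^(k+1+J) * r0 := by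
      rw [hr0eq, pow_add, pow_add, pow_one]
      field_simp
      ring
    rw [e1]
    refine (hA (k+1+J)).trans (le_of_eq ?_)
    congr 2
    rw [pow_add, show (4:ℝ)^(k+1)*4^(J:ℕ)*r0^2 = 4^(k+1)*(r0^2*4^(J:ℕ)) by ring, hr0sq]
  -- annuli
  set A : ℕ → Set (∀ i, 𝒳 i → ℝ) :=
    fun k => {u | 2^k * r < bH μ t u ∧ bH μ t u ≤ 2^(k+1) * r} with hAdef
  have hAmeas : ∀ k, MeasurableSet (A k) := fun k =>
    (measurableSet_lt measurable_const hmeas).inter (measurableSet_le hmeas measurable_const)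
  have hcover : {u | u ∈ Sbar ∧ r < bH μ t u} ⊆ ⋃ k, A k := by
    intro u hu
    have hru : r < bH μ t u := hu.2
    have hex : ∃ n : ℕ, bH μ t u ≤ 2^n * r := by
      obtain ⟨n, hn⟩ := pow_unbounded_of_one_lt (bH μ t u / r) (by norm_num : (1:ℝ) < 2)
      rw [div_lt_iff₀ hr] at hn
      exact ⟨n, hn.le⟩
    have hm : bH μ t u ≤ 2^(Nat.find hex) * r := Nat.find_spec hex
    have hm0 : Nat.find hex ≠ 0 := by
      intro h
      rw [h] at hm
      norm_num at hm
      linarith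
    obtain ⟨k, hk⟩ := Nat.exists_eq_succ_of_ne_zero hm0
    have hklt : ¬ (bH μ t u ≤ 2^k * r) := Nat.find_min hex (by omega)
    refine mem_iUnion.mpr ⟨k, ⟨lt_of_not_ge hklt, ?_⟩⟩
    rw [← Nat.succ_eq_add_one, ← hk]
    exact hm
  -- per-annulus integral bound
  have hann : ∀ k : ℕ, ∫⁻ u in A k, ENNReal.ofReal (Real.exp (-a * bH μ t u ^ 2)) ∂pr ≤
      ENNReal.ofReal (Real.exp (-(a*r^2/2) * 4^k)) * pr {u | bH μ t u ≤ r0} := by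
    intro k
    have hpt : ∀ u ∈ A k, ENNReal.ofReal (Real.exp (-a * bH μ t u ^ 2)) ≤
        ENNReal.ofReal (Real.exp (-a * (4^k * r^2))) := by
      intro u hu
      apply ENNReal.ofReal_le_ofReal
      apply Real.exp_le_exp.mpr
      have h1 : (2:ℝ)^k * r < bH μ t u := hu.1
      have h2 : ((2:ℝ)^k * r)^2 ≤ bH μ t u ^ 2 := by
        apply pow_le_pow_left₀ (by positivity) h1.le
      rw [mul_pow, h24] at h2
      nlinarith
    calc ∫⁻ u in A k, ENNReal.ofReal (Real.exp (-a * bH μ t u ^ 2)) ∂pr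
        ≤ ∫⁻ _ in A k, ENNReal.ofReal (Real.exp (-a * (4^k * r^2))) ∂pr := by
          refine lintegral_mono_ae ((ae_restrict_iff' (hAmeas k)).2 (ae_of_all _ hpt))
      _ = ENNReal.ofReal (Real.exp (-a * (4^k * r^2))) * pr (A k) := setLIntegral_const _ _
      _ ≤ ENNReal.ofReal (Real.exp (-a * (4^k * r^2))) * pr {u | bH μ t u ≤ 2^(k+1) * r} :=
          mul_le_mul_right (measure_mono fun u hu => hu.2) _
      _ ≤ ENNReal.ofReal (Real.exp (-a * (4^k * r^2))) *
            (ENNReal.ofReal (Real.exp (a/8 * (4^(k+1) * r^2))) * pr {u | bH μ t u ≤ r0}) :=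
          mul_le_mul_right (hBr k) _
      _ = ENNReal.ofReal (Real.exp (-(a*r^2/2) * 4^k)) * pr {u | bH μ t u ≤ r0} := by
          rw [← mul_assoc, ← ENNReal.ofReal_mul (le_of_lt (Real.exp_pos _)), ← Real.exp_add]
          congr 2
          ring
  -- lower bound on the right-hand side integral
  have hres : pr.restrict Sbar = pr := by
    have h1 : Sbar =ᵐ[pr] (univ : Set (∀ i, 𝒳 i → ℝ)) := ae_eq_univ.2 hpr
    rw [Measure.restrict_congr_set h1, Measure.restrict_univ]
  have hbr0 : b * r0^2 ≤ a * r^2 / 4 := by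
    have hba : b ≤ a * 4^(J-1) := by
      rw [div_le_iff₀ ha] at hJab
      linarith [hJab]
    have hJpow : (4:ℝ)^(J:ℕ) = 4 * 4^(J-1) := by
      conv_lhs => rw [show J = (J-1)+1 from (Nat.succ_pred_eq_of_pos hJ).symm]
      ring
    have hr0sq' : r0^2 = r^2 / 4^(J:ℕ) := by
      rw [← hr0sq]
      field_simp
    rw [hr0sq', hJpow]
    have h4pos : (0:ℝ) < 4^(J-1) := by positivity
    have hrr : (0:ℝ) ≤ r^2 := sq_nonneg r
    have e : b * (r^2/(4*4^(J-1))) = b * r^2 / (4*4^(J-1)) := by ring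
    rw [e, div_le_div_iff₀ (by positivity) (by norm_num)]
    calc b * r^2 * 4 ≤ a * 4^(J-1) * r^2 * 4 := by nlinarith
      _ = a * r^2 * (4 * 4^(J-1)) := by ring
  have hRHS : ENNReal.ofReal (Real.exp (-(a*r^2)/4)) * pr {u | bH μ t u ≤ r0} ≤
      ∫⁻ u in Sbar, ENNReal.ofReal (Real.exp (-b * bH μ t u ^ 2)) ∂pr := by
    rw [hres]
    have hmeasB : MeasurableSet {u | bH μ t u ≤ r0} := measurableSet_le hmeas measurable_const
    calc ENNReal.ofReal (Real.exp (-(a*r^2)/4)) * pr {u | bH μ t u ≤ r0}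
        ≤ ENNReal.ofReal (Real.exp (-b * r0^2)) * pr {u | bH μ t u ≤ r0} := by
          refine mul_le_mul_left (ENNReal.ofReal_le_ofReal (Real.exp_le_exp.mpr ?_)) _
          linarith
      _ = ∫⁻ _ in {u | bH μ t u ≤ r0}, ENNReal.ofReal (Real.exp (-b * r0^2)) ∂pr :=
          (setLIntegral_const _ _).symm
      _ ≤ ∫⁻ u in {u | bH μ t u ≤ r0}, ENNReal.ofReal (Real.exp (-b * bH μ t u ^ 2)) ∂pr := by
          refine lintegral_mono_ae ((ae_restrict_iff' hmeasB).2 (ae_of_all _ ?_))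
          intro u hu
          apply ENNReal.ofReal_le_ofReal
          apply Real.exp_le_exp.mpr
          have h2 : bH μ t u ^ 2 ≤ r0^2 := pow_le_pow_left₀ (hH0 u) hu 2
          nlinarith
      _ ≤ ∫⁻ u, ENNReal.ofReal (Real.exp (-b * bH μ t u ^ 2)) ∂pr :=
          setLIntegral_le_lintegral _ _
  -- main chain
  have hsplit : ENNReal.ofReal (Real.exp (1/4 - a*r^2/2)) =
      ENNReal.ofReal (Real.exp ((1 - a*r^2)/4)) * ENNReal.ofReal (Real.exp (-(a*r^2)/4)) := by
    rw [← ENNReal.ofReal_mul (le_of_lt (Real.exp_pos _)), ← Real.exp_add]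
    congr 1
    ring
  calc ∫⁻ u in {u ∈ Sbar | r < bH μ t u},
        ENNReal.ofReal (Real.exp (-a * bH μ t u ^ 2)) ∂pr
      ≤ ∫⁻ u in ⋃ k, A k, ENNReal.ofReal (Real.exp (-a * bH μ t u ^ 2)) ∂pr :=
        lintegral_mono_set hcover
    _ ≤ ∑' k : ℕ, ∫⁻ u in A k, ENNReal.ofReal (Real.exp (-a * bH μ t u ^ 2)) ∂pr :=
        lintegral_iUnion_le _ _
    _ ≤ ∑' k : ℕ, ENNReal.ofReal (Real.exp (-(a*r^2/2) * 4^k)) * pr {u | bH μ t u ≤ r0} :=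
        ENNReal.tsum_le_tsum hann
    _ = (∑' k : ℕ, ENNReal.ofReal (Real.exp (-(a*r^2/2) * 4^k))) * pr {u | bH μ t u ≤ r0} :=
        ENNReal.tsum_mul_right
    _ ≤ ENNReal.ofReal (Real.exp (1/4 - a*r^2/2)) * pr {u | bH μ t u ≤ r0} :=
        mul_le_mul_left (aux_tsum (a*r^2) hc1) _
    _ = ENNReal.ofReal (Real.exp ((1 - a*r^2)/4)) *
          (ENNReal.ofReal (Real.exp (-(a*r^2)/4)) * pr {u | bH μ t u ≤ r0}) := by
        rw [hsplit, mul_assoc]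
    _ ≤ ENNReal.ofReal (Real.exp ((1 - a * r ^ 2) / 4)) *
          ∫⁻ u in Sbar, ENNReal.ofReal (Real.exp (-b * bH μ t u ^ 2)) ∂pr :=
        mul_le_mul_right hRHS _

end
end

section
/- If the density model S̄ is a finite set and S = S̄, then for every density 𝐬∈𝕃, ε^{S̄}(𝐬) ≤ √((c₀/3)·min{(1+c₀√2)·log(2|S̄|²), n}), where c₀ = 1000. -/
open MeasureTheory Real Filter Set
open scoped Classical ENNReal

noncomputable section

/-- `ψ(√(b/a))` where `ψ(x)=(x−1)/(x+1)`, `ψ(+∞)=1`, with the conventions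
`a/0 = +∞` for `a>0` and `0/0 = 1`. -/
def psiR (a b : ℝ) : ℝ :=
  if a = 0 then (if b = 0 then 0 else 1)
  else (Real.sqrt (b / a) - 1) / (Real.sqrt (b / a) + 1)

/-- `Ψ(𝐱,𝐭,𝐭′) = Σᵢ ψ(√(tᵢ′(xᵢ)/tᵢ(xᵢ)))`. -/
def Psi {n : ℕ} {𝒳 : Fin n → Type*} (x : ∀ i, 𝒳 i) (t t' : ∀ i, 𝒳 i → ℝ) : ℝ :=
  ∑ i, psiR (t i (x i)) (t' i (x i))

/-- `t` is an `n`-tuple of probability densities with respect to the `μ i`'s, i.e. an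
element of `𝕃 = ∏ᵢ ℒᵢ`. -/
def IsDensityT {n : ℕ} {𝒳 : Fin n → Type*} [∀ i, MeasurableSpace (𝒳 i)]
    (μ : ∀ i, Measure (𝒳 i)) (t : ∀ i, 𝒳 i → ℝ) : Prop :=
  ∀ i, Measurable (t i) ∧ (∀ x, 0 ≤ t i x) ∧
    ∫⁻ x, ENNReal.ofReal (t i x) ∂(μ i) = 1

/-- The law `P_𝐬 = ⊗ᵢ (sᵢ·μᵢ)` of `X=(X₁,…,Xₙ)`. -/
def Plaw {n : ℕ} {𝒳 : Fin n → Type*} [∀ i, MeasurableSpace (𝒳 i)]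
    (μ : ∀ i, Measure (𝒳 i)) (s : ∀ i, 𝒳 i → ℝ) : Measure (∀ i, 𝒳 i) :=
  Measure.pi fun i => (μ i).withDensity fun x => ENNReal.ofReal (s i x)

/-- `𝐰^{S̄}(𝐬,y)`: expectation under `P_𝐬` of the supremum of the centred process
`|Ψ(X,𝐭,𝐭′)−E_𝐬Ψ(X,𝐭,𝐭′)|` over pairs `𝐭,𝐭′` in the Hellinger ball of radius `y`
of the countable set `S`, with the convention that the supremum over ∅ is 1. -/
def wS {n : ℕ} {𝒳 : Fin n → Type*} [∀ i, MeasurableSpace (𝒳 i)]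
    (μ : ∀ i, Measure (𝒳 i)) (s : ∀ i, 𝒳 i → ℝ) (S : Set (∀ i, 𝒳 i → ℝ)) (y : ℝ) : ℝ :=
  if Nonempty {p : (∀ i, 𝒳 i → ℝ) × (∀ i, 𝒳 i → ℝ) //
      p.1 ∈ S ∧ p.2 ∈ S ∧ bH μ s p.1 ≤ y ∧ bH μ s p.2 ≤ y} then
    ∫ x, (⨆ p : {p : (∀ i, 𝒳 i → ℝ) × (∀ i, 𝒳 i → ℝ) //
        p.1 ∈ S ∧ p.2 ∈ S ∧ bH μ s p.1 ≤ y ∧ bH μ s p.2 ≤ y},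
      |Psi x p.1.1 p.1.2 - ∫ x', Psi x' p.1.1 p.1.2 ∂(Plaw μ s)|) ∂(Plaw μ s)
  else 1

/-- `ε^{S̄}(𝐬) = sup{y ≥ 1 : 𝐰^{S̄}(𝐬,y) > 6c₀⁻¹y²}` with `c₀ = 1000`. -/
def epsS {n : ℕ} {𝒳 : Fin n → Type*} [∀ i, MeasurableSpace (𝒳 i)]
    (μ : ∀ i, Measure (𝒳 i)) (s : ∀ i, 𝒳 i → ℝ) (S : Set (∀ i, 𝒳 i → ℝ)) : ℝ :=
  sSup {y : ℝ | 1 ≤ y ∧ 6 / 1000 * y ^ 2 < wS μ s S y}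


section Helpers

lemma integral_pi_eq_prod' {ι : Type*} [Fintype ι] {E : ι → Type*} [∀ i, MeasurableSpace (E i)]
    (ν : ∀ i, Measure (E i)) [∀ i, SigmaFinite (ν i)] (f : ∀ i, E i → ℝ) :
    ∫ x, ∏ i, f i (x i) ∂Measure.pi ν = ∏ i, ∫ x, f i x ∂ν i := by
  letI : ∀ i, MeasureSpace (E i) := fun i => ⟨ν i⟩
  exact MeasureTheory.integral_fintype_prod_eq_prod f

lemma exp_le_quadratic {c t : ℝ} (hc : 0 ≤ c) (ht : t ≤ c) :
    Real.exp t ≤ 1 + t + (Real.exp c / 2) * t ^ 2 := by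
  rcases le_or_gt t 0 with h0 | h0
  · have key : Real.exp t ≤ 1 + t + t ^ 2 / 2 := by
      have hd : ∀ u : ℝ, HasDerivAt (fun u : ℝ => 1 + u + u ^ 2 / 2 - Real.exp u)
          (1 + u - Real.exp u) u := by
        intro u
        have h1 : HasDerivAt (fun u : ℝ => 1 + u + u ^ 2 / 2 - Real.exp u)
            (0 + 1 + (↑2 * u ^ 1) / 2 - Real.exp u) u :=
          (((hasDerivAt_const u (1:ℝ)).add (hasDerivAt_id u)).add
            ((hasDerivAt_pow 2 u).div_const 2)).sub (Real.hasDerivAt_exp u)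
        convert h1 using 1; push_cast; ring
      have hmono : AntitoneOn (fun u : ℝ => 1 + u + u ^ 2 / 2 - Real.exp u) (Set.Iic (0:ℝ)) := by
        apply antitoneOn_of_deriv_nonpos (convex_Iic 0)
        · fun_prop
        · exact fun u _ => (hd u).differentiableAt.differentiableWithinAt
        · intro u hu
          rw [(hd u).deriv]
          linarith [Real.add_one_le_exp u]
      have := hmono (Set.mem_Iic.2 h0) (Set.mem_Iic.2 le_rfl) h0
      simp only [Real.exp_zero] at this
      nlinarith
    have h1 : (1:ℝ) ≤ Real.exp c := Real.one_le_exp hc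
    nlinarith [sq_nonneg t]
  · have hd : ∀ u : ℝ, HasDerivAt (fun u : ℝ => 1 + u + (Real.exp c / 2) * u ^ 2 - Real.exp u)
        (1 + (Real.exp c / 2) * (2 * u) - Real.exp u) u := by
      intro u
      have h1 : HasDerivAt (fun u : ℝ => 1 + u + (Real.exp c / 2) * u ^ 2 - Real.exp u)
          (0 + 1 + (Real.exp c / 2) * (↑2 * u ^ 1) - Real.exp u) u :=
        (((hasDerivAt_const u (1:ℝ)).add (hasDerivAt_id u)).add
          (((hasDerivAt_pow 2 u)).const_mul (Real.exp c / 2))).sub (Real.hasDerivAt_exp u)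
      convert h1 using 1; push_cast; ring
    have hmono : MonotoneOn (fun u : ℝ => 1 + u + (Real.exp c / 2) * u ^ 2 - Real.exp u)
        (Set.Icc (0:ℝ) c) := by
      apply monotoneOn_of_deriv_nonneg (convex_Icc 0 c)
      · fun_prop
      · exact fun u _ => (hd u).differentiableAt.differentiableWithinAt
      · intro u hu
        rw [interior_Icc] at hu
        rw [(hd u).deriv]
        have h1 : 1 - u ≤ Real.exp (-u) := by linarith [Real.add_one_le_exp (-u)]
        have h2 : Real.exp u * (1 - u) ≤ 1 := by
          calc Real.exp u * (1 - u) ≤ Real.exp u * Real.exp (-u) :=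
                mul_le_mul_of_nonneg_left h1 (Real.exp_nonneg u)
            _ = 1 := by rw [← Real.exp_add]; simp
        have h3 : Real.exp u ≤ 1 + u * Real.exp u := by nlinarith
        have h4 : u * Real.exp u ≤ u * Real.exp c :=
          mul_le_mul_of_nonneg_left (Real.exp_le_exp.2 hu.2.le) hu.1.le
        linarith
    have := hmono (Set.mem_Icc.2 ⟨le_rfl, hc⟩) (Set.mem_Icc.2 ⟨h0.le, ht⟩) h0.le
    simp only [Real.exp_zero] at this
    nlinarith

lemma var_core {u A B : ℝ} (hu : 0 ≤ u) (hA : 0 ≤ A) (hB : 0 ≤ B) :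
    u ^ 2 * (B - A) ^ 2 ≤ ((u - A) ^ 2 + (u - B) ^ 2) * (A + B) ^ 2 := by
  rcases eq_or_lt_of_le (add_nonneg hA hB) with hS | hS
  · have hA0 : A = 0 := by linarith
    have hB0 : B = 0 := by linarith
    simp [hA0, hB0]
  · have hS2 : 0 < (A + B) ^ 2 := by positivity
    have hD : (B - A) ^ 2 ≤ (A + B) ^ 2 := by nlinarith [mul_nonneg hA hB]
    nlinarith [sq_nonneg ((2 * (A + B) ^ 2 - (B - A) ^ 2) * u - (A + B) ^ 3),
      mul_nonneg (mul_nonneg (mul_nonneg hA hB) (sq_nonneg (A + B))) (sq_nonneg (B - A)),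
      mul_pos hS2 hS2]

lemma abs_psiR_le_one (a b : ℝ) : |psiR a b| ≤ 1 := by
  unfold psiR
  split_ifs with h1 h2
  · simp
  · simp
  · have hr : 0 ≤ Real.sqrt (b / a) := Real.sqrt_nonneg _
    rw [abs_div, div_le_one (by positivity)]
    rw [abs_of_pos (by positivity : (0:ℝ) < Real.sqrt (b/a) + 1)]
    rcases abs_cases (Real.sqrt (b / a) - 1) with ⟨h, _⟩ | ⟨h, _⟩ <;> linarith

lemma measurable_psiR {X : Type*} [MeasurableSpace X] {t t' : X → ℝ}
    (ht : Measurable t) (ht' : Measurable t') :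
    Measurable fun x => psiR (t x) (t' x) := by
  unfold psiR
  have h0 : MeasurableSet {x | t x = 0} := ht (measurableSet_singleton 0)
  have h0' : MeasurableSet {x | t' x = 0} := ht' (measurableSet_singleton 0)
  apply Measurable.ite h0
  · exact Measurable.ite h0' measurable_const measurable_const
  · exact ((ht'.div ht).sqrt.sub measurable_const).div
      ((ht'.div ht).sqrt.add measurable_const)

lemma psi_sq_le {sx a b : ℝ} (hs : 0 ≤ sx) (ha : 0 ≤ a) (hb : 0 ≤ b) :
    sx * (psiR a b) ^ 2 ≤
      (Real.sqrt sx - Real.sqrt a) ^ 2 + (Real.sqrt sx - Real.sqrt b) ^ 2 := by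
  have hu : Real.sqrt sx ^ 2 = sx := Real.sq_sqrt hs
  unfold psiR
  split_ifs with h1 h2
  · simp; positivity
  · have : sx * 1 ^ 2 = Real.sqrt sx ^ 2 := by rw [hu]; ring
    rw [this, h1, Real.sqrt_zero]
    nlinarith [sq_nonneg (Real.sqrt sx - Real.sqrt b)]
  · have ha' : 0 < a := lt_of_le_of_ne ha (Ne.symm h1)
    have hA : 0 < Real.sqrt a := Real.sqrt_pos.2 ha'
    have hsqrt : Real.sqrt (b / a) = Real.sqrt b / Real.sqrt a := Real.sqrt_div hb a
    rw [hsqrt]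
    set u := Real.sqrt sx
    set A := Real.sqrt a
    set B := Real.sqrt b
    have hB : 0 ≤ B := Real.sqrt_nonneg _
    have hu0 : 0 ≤ u := Real.sqrt_nonneg _
    have hAB : 0 < A + B := by linarith
    have hexp : (B / A - 1) / (B / A + 1) = (B - A) / (A + B) := by
      rw [div_sub_one hA.ne', div_add_one hA.ne', div_div_div_cancel_right₀ hA.ne' (B - A) (B + A),
        add_comm A B]
    rw [hexp]
    have key := var_core hu0 hA.le hB
    rw [div_pow]
    calc sx * ((B - A) ^ 2 / (A + B) ^ 2) = u ^ 2 * (B - A) ^ 2 / (A + B) ^ 2 := by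
          rw [hu]; ring
      _ ≤ ((u - A) ^ 2 + (u - B) ^ 2) := by
          rw [div_le_iff₀ (by positivity)]
          exact key

section Coord
variable {X : Type*} [MeasurableSpace X] (μ : Measure X)

lemma density_isProb {s : X → ℝ}
    (h1 : ∫⁻ x, ENNReal.ofReal (s x) ∂μ = 1) :
    IsProbabilityMeasure (μ.withDensity fun x => ENNReal.ofReal (s x)) := by
  constructor
  rw [withDensity_apply _ MeasurableSet.univ, setLIntegral_univ, h1]

lemma density_integrable {s : X → ℝ} (hs : Measurable s) (hs0 : ∀ x, 0 ≤ s x)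
    (h1 : ∫⁻ x, ENNReal.ofReal (s x) ∂μ = 1) : Integrable s μ := by
  refine ⟨hs.aestronglyMeasurable, ?_⟩
  rw [hasFiniteIntegral_iff_ofReal (ae_of_all _ hs0), h1]
  exact ENNReal.one_lt_top

lemma integral_density {s : X → ℝ} (hs : Measurable s) (hs0 : ∀ x, 0 ≤ s x) (g : X → ℝ) :
    ∫ x, g x ∂(μ.withDensity fun x => ENNReal.ofReal (s x)) = ∫ x, s x * g x ∂μ := by
  have : (fun x => ENNReal.ofReal (s x)) = fun x => ((fun x => (s x).toNNReal) x : ℝ≥0∞) := rfl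
  rw [this, integral_withDensity_eq_integral_smul hs.real_toNNReal g]
  congr 1
  ext x
  simp [NNReal.smul_def, Real.coe_toNNReal _ (hs0 x)]

lemma integral_psi_sq_le {s t t' : X → ℝ}
    (hs : Measurable s) (hs0 : ∀ x, 0 ≤ s x) (hs1 : ∫⁻ x, ENNReal.ofReal (s x) ∂μ = 1)
    (ht : Measurable t) (ht0 : ∀ x, 0 ≤ t x) (ht1 : ∫⁻ x, ENNReal.ofReal (t x) ∂μ = 1)
    (ht' : Measurable t') (ht0' : ∀ x, 0 ≤ t' x)
    (ht1' : ∫⁻ x, ENNReal.ofReal (t' x) ∂μ = 1) :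
    ∫ x, (psiR (t x) (t' x)) ^ 2 ∂(μ.withDensity fun x => ENNReal.ofReal (s x))
      ≤ 2 * hellSq μ s t + 2 * hellSq μ s t' := by
  rw [integral_density μ hs hs0]
  have hint_s : Integrable s μ := density_integrable μ hs hs0 hs1
  have hint_t : Integrable t μ := density_integrable μ ht ht0 ht1
  have hint_t' : Integrable t' μ := density_integrable μ ht' ht0' ht1'
  have sqint : ∀ (u : X → ℝ), Measurable u → (∀ x, 0 ≤ u x) → Integrable u μ →
      Integrable (fun x => (Real.sqrt (s x) - Real.sqrt (u x)) ^ 2) μ := by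
    intro u hu hu0 huint
    have hbound : Integrable (fun x => 2 * (s x + u x)) μ := by
      have : Integrable (fun x => s x + u x) μ := hint_s.add huint
      exact this.const_mul 2
    refine Integrable.mono' hbound
      ((hs.sqrt.sub hu.sqrt).pow_const 2).aestronglyMeasurable (ae_of_all _ fun x => ?_)
    have h1 : Real.sqrt (s x) ^ 2 = s x := Real.sq_sqrt (hs0 x)
    have h2 : Real.sqrt (u x) ^ 2 = u x := Real.sq_sqrt (hu0 x)
    rw [Real.norm_eq_abs, abs_of_nonneg (sq_nonneg _)]
    nlinarith [sq_nonneg (Real.sqrt (s x) + Real.sqrt (u x))]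
  have hmono : ∀ x, s x * (psiR (t x) (t' x)) ^ 2 ≤
      (Real.sqrt (s x) - Real.sqrt (t x)) ^ 2 + (Real.sqrt (s x) - Real.sqrt (t' x)) ^ 2 :=
    fun x => psi_sq_le (hs0 x) (ht0 x) (ht0' x)
  have hle : ∫ x, s x * (psiR (t x) (t' x)) ^ 2 ∂μ ≤
      ∫ x, ((Real.sqrt (s x) - Real.sqrt (t x)) ^ 2
        + (Real.sqrt (s x) - Real.sqrt (t' x)) ^ 2) ∂μ :=
    integral_mono_of_nonneg
      (ae_of_all _ fun x => mul_nonneg (hs0 x) (sq_nonneg _))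
      ((sqint t ht ht0 hint_t).add (sqint t' ht' ht0' hint_t')) (ae_of_all _ hmono)
  rw [integral_add (sqint t ht ht0 hint_t) (sqint t' ht' ht0' hint_t')] at hle
  unfold hellSq
  linarith

lemma coord_mgf {s t t' : X → ℝ}
    (hs : Measurable s) (hs0 : ∀ x, 0 ≤ s x) (hs1 : ∫⁻ x, ENNReal.ofReal (s x) ∂μ = 1)
    (ht : Measurable t) (ht0 : ∀ x, 0 ≤ t x) (ht1 : ∫⁻ x, ENNReal.ofReal (t x) ∂μ = 1)
    (ht' : Measurable t') (ht0' : ∀ x, 0 ≤ t' x)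
    (ht1' : ∫⁻ x, ENNReal.ofReal (t' x) ∂μ = 1) (l : ℝ) :
    (∫ x, Real.exp (l * (psiR (t x) (t' x)
        - ∫ x', psiR (t x') (t' x') ∂(μ.withDensity fun x => ENNReal.ofReal (s x))))
      ∂(μ.withDensity fun x => ENNReal.ofReal (s x)))
      ≤ Real.exp ((Real.exp (2 * |l|) / 2) * l ^ 2
          * (2 * hellSq μ s t + 2 * hellSq μ s t')) := by
  set ν := μ.withDensity fun x => ENNReal.ofReal (s x) with hν
  haveI : IsProbabilityMeasure ν := density_isProb μ hs1
  set ψ : X → ℝ := fun x => psiR (t x) (t' x) with hψ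
  have hψm : Measurable ψ := measurable_psiR ht ht'
  have hψb : ∀ x, |ψ x| ≤ 1 := fun x => abs_psiR_le_one _ _
  have hψint : Integrable ψ ν :=
    Integrable.mono' (integrable_const 1) hψm.aestronglyMeasurable (ae_of_all _ hψb)
  set m := ∫ x', ψ x' ∂ν with hm
  set φ : X → ℝ := fun x => ψ x - m with hφ
  have hmb : |m| ≤ 1 := by
    calc |m| = ‖∫ x', ψ x' ∂ν‖ := rfl
      _ ≤ 1 * (ν univ).toReal := norm_integral_le_of_norm_le_const (ae_of_all _ hψb)
      _ = 1 := by simp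
  have hZb : ∀ x, |φ x| ≤ 2 := fun x => by
    calc |φ x| ≤ |ψ x| + |m| := abs_sub _ _
      _ ≤ 2 := by linarith [hψb x]
  have hφm : Measurable φ := hψm.sub measurable_const
  have hφint : Integrable φ ν := hψint.sub (integrable_const m)
  set κ := Real.exp (2 * |l|) / 2 with hκ
  set c2 := κ * l ^ 2 with hc2
  have hpt : ∀ x, Real.exp (l * φ x) ≤ (1 + l * φ x) + c2 * φ x ^ 2 := by
    intro x
    have h := exp_le_quadratic (c := 2 * |l|) (by positivity) (t := l * φ x)
      (by calc l * φ x ≤ |l * φ x| := le_abs_self _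
            _ = |l| * |φ x| := abs_mul _ _
            _ ≤ |l| * 2 := mul_le_mul_of_nonneg_left (hZb x) (abs_nonneg l)
            _ = 2 * |l| := by ring)
    calc Real.exp (l * φ x) ≤ 1 + l * φ x + κ * (l * φ x) ^ 2 := h
      _ = (1 + l * φ x) + c2 * φ x ^ 2 := by rw [hc2]; ring
  have hexpint : Integrable (fun x => Real.exp (l * φ x)) ν := by
    refine Integrable.mono' (integrable_const (Real.exp (2 * |l|)))
      ((hφm.const_mul l).exp).aestronglyMeasurable (ae_of_all _ fun x => ?_)
    rw [Real.norm_eq_abs, abs_of_pos (Real.exp_pos _), Real.exp_le_exp]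
    calc l * φ x ≤ |l| * |φ x| := by rw [← abs_mul]; exact le_abs_self _
      _ ≤ |l| * 2 := mul_le_mul_of_nonneg_left (hZb x) (abs_nonneg l)
      _ = 2 * |l| := by ring
  have hsqint : Integrable (fun x => φ x ^ 2) ν := by
    refine Integrable.mono' (integrable_const 4)
      (hφm.pow_const 2).aestronglyMeasurable (ae_of_all _ fun x => ?_)
    rw [Real.norm_eq_abs, abs_of_nonneg (sq_nonneg _)]
    nlinarith [hZb x, abs_nonneg (φ x), le_abs_self (φ x), neg_abs_le (φ x)]
  have hcent : ∫ x, φ x ∂ν = 0 := by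
    rw [hφ]
    rw [integral_sub hψint (integrable_const m), integral_const]
    simp [hm]
  have hψsqint : Integrable (fun x => ψ x ^ 2) ν := by
    refine Integrable.mono' (integrable_const 1)
      (hψm.pow_const 2).aestronglyMeasurable (ae_of_all _ fun x => ?_)
    rw [Real.norm_eq_abs, abs_of_nonneg (sq_nonneg _)]
    nlinarith [hψb x, abs_nonneg (ψ x), le_abs_self (ψ x), neg_abs_le (ψ x)]
  have hvar : ∫ x, φ x ^ 2 ∂ν ≤ ∫ x, ψ x ^ 2 ∂ν := by
    have h1 : ∀ x, φ x ^ 2 = ψ x ^ 2 - (2 * m * ψ x - m ^ 2) := fun x => by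
      rw [hφ]; ring
    have hint2 : Integrable (fun x => 2 * m * ψ x - m ^ 2) ν := by
      have := (hψint.const_mul (2 * m)).sub (integrable_const (m ^ 2))
      exact this
    have h2 : ∫ x, φ x ^ 2 ∂ν = ∫ x, (ψ x ^ 2 - (2 * m * ψ x - m ^ 2)) ∂ν := by
      simp only [h1]
    rw [h2, integral_sub hψsqint hint2, integral_sub (hψint.const_mul (2 * m))
      (integrable_const (m ^ 2)), integral_const_mul _ _, integral_const]
    simp only [← hm]
    have : ν.real univ = 1 := by simp
    rw [this, one_smul]
    nlinarith [sq_nonneg m]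
  have hvar2 : ∫ x, ψ x ^ 2 ∂ν ≤ 2 * hellSq μ s t + 2 * hellSq μ s t' :=
    integral_psi_sq_le μ hs hs0 hs1 ht ht0 ht1 ht' ht0' ht1'
  have hvnonneg : 0 ≤ ∫ x, φ x ^ 2 ∂ν := integral_nonneg fun x => sq_nonneg _
  have hlinint : Integrable (fun x => 1 + l * φ x) ν := by
    have := (integrable_const (1:ℝ)).add (hφint.const_mul l)
    exact this
  have step1 : (∫ x, Real.exp (l * φ x) ∂ν) ≤ 1 + c2 * ∫ x, φ x ^ 2 ∂ν := by
    have hint3 : Integrable (fun x => (1 + l * φ x) + c2 * φ x ^ 2) ν :=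
      hlinint.add (hsqint.const_mul c2)
    have h := integral_mono hexpint hint3 hpt
    rw [integral_add hlinint (hsqint.const_mul c2), integral_add (integrable_const 1)
      (hφint.const_mul l), integral_const_mul _ _, integral_const_mul _ _,
      integral_const, hcent] at h
    simpa using h
  have hκl : 0 ≤ c2 := by rw [hc2, hκ]; positivity
  calc (∫ x, Real.exp (l * φ x) ∂ν)
      ≤ 1 + c2 * ∫ x, φ x ^ 2 ∂ν := step1
    _ ≤ Real.exp (c2 * ∫ x, φ x ^ 2 ∂ν) := by
        linarith [Real.add_one_le_exp (c2 * ∫ x, φ x ^ 2 ∂ν)]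
    _ ≤ Real.exp (κ * l ^ 2 * (2 * hellSq μ s t + 2 * hellSq μ s t')) := by
        rw [Real.exp_le_exp, hc2]
        exact mul_le_mul_of_nonneg_left (hvar.trans hvar2) (by rw [← hc2]; exact hκl)
end Coord

end Helpers
section Tuple
variable {n : ℕ} {𝒳 : Fin n → Type*} [∀ i, MeasurableSpace (𝒳 i)]

lemma integral_eval (ν : ∀ i, Measure (𝒳 i)) [∀ i, IsProbabilityMeasure (ν i)]
    (i : Fin n) (g : 𝒳 i → ℝ) :
    ∫ x : ∀ j, 𝒳 j, g (x i) ∂Measure.pi ν = ∫ z, g z ∂ν i := by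
  have h1 : ∀ x : ∀ j, 𝒳 j,
      g (x i) = ∏ j, Function.update (fun j (_ : 𝒳 j) => (1:ℝ)) i g j (x j) := by
    intro x
    rw [Finset.prod_eq_single i]
    · rw [Function.update_self]
    · intro b _ hb
      rw [Function.update_of_ne hb]
    · intro h; exact absurd (Finset.mem_univ i) h
  calc ∫ x : ∀ j, 𝒳 j, g (x i) ∂Measure.pi ν
      = ∫ x : ∀ j, 𝒳 j, ∏ j, Function.update (fun j (_ : 𝒳 j) => (1:ℝ)) i g j (x j)
        ∂Measure.pi ν := by simp only [h1]
    _ = ∏ j, ∫ z, Function.update (fun j (_ : 𝒳 j) => (1:ℝ)) i g j z ∂ν j :=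
        integral_pi_eq_prod' ν _
    _ = ∫ z, g z ∂ν i := by
        rw [Finset.prod_eq_single i]
        · rw [Function.update_self]
        · intro b _ hb
          rw [Function.update_of_ne hb]
          simp
        · intro h; exact absurd (Finset.mem_univ i) h

lemma hellSq_nonneg {X : Type*} [MeasurableSpace X] (ν : Measure X) (p q : X → ℝ) :
    0 ≤ hellSq ν p q :=
  mul_nonneg (by norm_num) (integral_nonneg fun x => sq_nonneg _)

lemma sum_hellSq_le (μ : ∀ i, Measure (𝒳 i)) {s t : ∀ i, 𝒳 i → ℝ} {y : ℝ}
    (h : bH μ s t ≤ y) : ∑ i, hellSq (μ i) (s i) (t i) ≤ y ^ 2 := by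
  have h0 : 0 ≤ ∑ i, hellSq (μ i) (s i) (t i) :=
    Finset.sum_nonneg fun i _ => hellSq_nonneg _ _ _
  have h1 : Real.sqrt (∑ i, hellSq (μ i) (s i) (t i)) ^ 2 = ∑ i, hellSq (μ i) (s i) (t i) :=
    Real.sq_sqrt h0
  rw [← h1]
  exact pow_le_pow_left₀ (Real.sqrt_nonneg _) h 2

lemma abs_Psi_le (x : ∀ i, 𝒳 i) (t t' : ∀ i, 𝒳 i → ℝ) : |Psi x t t'| ≤ n := by
  unfold Psi
  calc |∑ i, psiR (t i (x i)) (t' i (x i))| ≤ ∑ i, |psiR (t i (x i)) (t' i (x i))| :=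
        Finset.abs_sum_le_sum_abs _ _
    _ ≤ ∑ _i : Fin n, (1:ℝ) := Finset.sum_le_sum fun i _ => abs_psiR_le_one _ _
    _ = n := by simp

lemma measurable_Psi {t t' : ∀ i, 𝒳 i → ℝ} (ht : ∀ i, Measurable (t i))
    (ht' : ∀ i, Measurable (t' i)) : Measurable fun x : ∀ i, 𝒳 i => Psi x t t' := by
  unfold Psi
  exact Finset.measurable_sum _ fun i _ =>
    (measurable_psiR (ht i) (ht' i)).comp (measurable_pi_apply i)

variable (μ : ∀ i, Measure (𝒳 i)) [∀ i, SigmaFinite (μ i)]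

lemma Plaw_isProb {s : ∀ i, 𝒳 i → ℝ} (hs : IsDensityT μ s) :
    IsProbabilityMeasure (Plaw μ s) := by
  haveI : ∀ i, IsProbabilityMeasure ((μ i).withDensity fun x => ENNReal.ofReal (s i x)) :=
    fun i => density_isProb _ (hs i).2.2
  unfold Plaw
  infer_instance

lemma pair_mgf {s t t' : ∀ i, 𝒳 i → ℝ}
    (hs : IsDensityT μ s) (ht : IsDensityT μ t) (ht' : IsDensityT μ t')
    {y : ℝ} (l : ℝ) (hbt : bH μ s t ≤ y) (hbt' : bH μ s t' ≤ y) :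
    ∫ x, Real.exp (l * (Psi x t t' - ∫ x', Psi x' t t' ∂(Plaw μ s))) ∂(Plaw μ s)
      ≤ Real.exp ((Real.exp (2 * |l|) / 2) * l ^ 2 * (4 * y ^ 2)) := by
  haveI hprob : ∀ i, IsProbabilityMeasure ((μ i).withDensity
      fun x => ENNReal.ofReal (s i x)) := fun i => density_isProb _ (hs i).2.2
  haveI : IsProbabilityMeasure (Plaw μ s) := Plaw_isProb μ hs
  have hPlaw : Plaw μ s
      = Measure.pi (fun i => (μ i).withDensity fun x => ENNReal.ofReal (s i x)) := rfl
  set ψ : ∀ i, 𝒳 i → ℝ := fun i z => psiR (t i z) (t' i z) with hψdef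
  have hψm : ∀ i, Measurable (ψ i) := fun i => measurable_psiR (ht i).1 (ht' i).1
  have hψb : ∀ i z, |ψ i z| ≤ 1 := fun i z => abs_psiR_le_one _ _
  set mi : Fin n → ℝ := fun i =>
    ∫ z, ψ i z ∂((μ i).withDensity fun x => ENNReal.ofReal (s i x)) with hmi
  have hPsiEq : ∀ x : ∀ j, 𝒳 j, Psi x t t' = ∑ i, ψ i (x i) := fun x => rfl
  have hintPsi_i : ∀ i, Integrable (fun x : ∀ j, 𝒳 j => ψ i (x i)) (Plaw μ s) := fun i =>
    Integrable.mono' (integrable_const 1)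
      ((hψm i).comp (measurable_pi_apply i)).aestronglyMeasurable
      (ae_of_all _ fun x => by rw [Real.norm_eq_abs]; exact hψb i (x i))
  have hmean : (∫ x', Psi x' t t' ∂(Plaw μ s)) = ∑ i, mi i := by
    calc ∫ x', Psi x' t t' ∂(Plaw μ s) = ∫ x', ∑ i, ψ i (x' i) ∂(Plaw μ s) := rfl
      _ = ∑ i, ∫ x', ψ i (x' i) ∂(Plaw μ s) := integral_finset_sum _ fun i _ => hintPsi_i i
      _ = ∑ i, mi i := Finset.sum_congr rfl fun i _ => by
            rw [hPlaw]; exact integral_eval _ i (ψ i)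
  have hfact : ∀ x : ∀ j, 𝒳 j, Real.exp (l * (Psi x t t' - ∫ x', Psi x' t t' ∂(Plaw μ s)))
      = ∏ i, Real.exp (l * (ψ i (x i) - mi i)) := by
    intro x
    rw [← Real.exp_sum]
    congr 1
    rw [hPsiEq x, hmean, ← Finset.sum_sub_distrib, Finset.mul_sum]
  set κ := Real.exp (2 * |l|) / 2 with hκ
  have hκ0 : 0 ≤ κ * l ^ 2 := by rw [hκ]; positivity
  calc ∫ x, Real.exp (l * (Psi x t t' - ∫ x', Psi x' t t' ∂(Plaw μ s))) ∂(Plaw μ s)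
      = ∫ x : ∀ j, 𝒳 j, ∏ i, Real.exp (l * (ψ i (x i) - mi i)) ∂(Plaw μ s) := by
        simp only [hfact]
    _ = ∏ i, ∫ z, Real.exp (l * (ψ i z - mi i))
          ∂((μ i).withDensity fun x => ENNReal.ofReal (s i x)) := by
        rw [hPlaw]
        exact integral_pi_eq_prod' _ fun i z => Real.exp (l * (ψ i z - mi i))
    _ ≤ ∏ i, Real.exp (κ * l ^ 2
          * (2 * hellSq (μ i) (s i) (t i) + 2 * hellSq (μ i) (s i) (t' i))) := by
        apply Finset.prod_le_prod
        · intro i _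
          exact integral_nonneg fun z => (Real.exp_pos _).le
        · intro i _
          exact coord_mgf (μ i) (hs i).1 (hs i).2.1 (hs i).2.2 (ht i).1 (ht i).2.1 (ht i).2.2
            (ht' i).1 (ht' i).2.1 (ht' i).2.2 l
    _ = Real.exp (∑ i, κ * l ^ 2
          * (2 * hellSq (μ i) (s i) (t i) + 2 * hellSq (μ i) (s i) (t' i))) :=
        (Real.exp_sum _ _).symm
    _ ≤ Real.exp (κ * l ^ 2 * (4 * y ^ 2)) := by
        rw [Real.exp_le_exp, ← Finset.mul_sum]
        apply mul_le_mul_of_nonneg_left ?_ hκ0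
        rw [Finset.sum_add_distrib, ← Finset.mul_sum, ← Finset.mul_sum]
        have h1 := sum_hellSq_le μ hbt
        have h2 := sum_hellSq_le μ hbt'
        nlinarith

end Tuple
section WS
variable {n : ℕ} {𝒳 : Fin n → Type*} [∀ i, MeasurableSpace (𝒳 i)]
  (μ : ∀ i, Measure (𝒳 i)) [∀ i, SigmaFinite (μ i)]

lemma mean_Psi_abs_le {s : ∀ i, 𝒳 i → ℝ} (hs : IsDensityT μ s) (t t' : ∀ i, 𝒳 i → ℝ) :
    |∫ x', Psi x' t t' ∂(Plaw μ s)| ≤ n := by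
  haveI : IsProbabilityMeasure (Plaw μ s) := Plaw_isProb μ hs
  calc |∫ x', Psi x' t t' ∂(Plaw μ s)| = ‖∫ x', Psi x' t t' ∂(Plaw μ s)‖ := rfl
    _ ≤ (n : ℝ) * ((Plaw μ s) Set.univ).toReal :=
        norm_integral_le_of_norm_le_const (ae_of_all _ fun x => by
          rw [Real.norm_eq_abs]; exact abs_Psi_le x t t')
    _ = n := by simp

lemma wS_le_two_n {Sbar : Set (∀ i, 𝒳 i → ℝ)} {s : ∀ i, 𝒳 i → ℝ} (hs : IsDensityT μ s)
    {y : ℝ}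
    (hnon : Nonempty {p : (∀ i, 𝒳 i → ℝ) × (∀ i, 𝒳 i → ℝ) //
      p.1 ∈ Sbar ∧ p.2 ∈ Sbar ∧ bH μ s p.1 ≤ y ∧ bH μ s p.2 ≤ y}) :
    wS μ s Sbar y ≤ 2 * n := by
  haveI : IsProbabilityMeasure (Plaw μ s) := Plaw_isProb μ hs
  rw [wS, if_pos hnon]
  have hZb : ∀ (t t' : ∀ i, 𝒳 i → ℝ) (x : ∀ i, 𝒳 i),
      |Psi x t t' - ∫ x', Psi x' t t' ∂(Plaw μ s)| ≤ 2 * n := by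
    intro t t' x
    calc |Psi x t t' - ∫ x', Psi x' t t' ∂(Plaw μ s)|
        ≤ |Psi x t t'| + |∫ x', Psi x' t t' ∂(Plaw μ s)| := abs_sub _ _
      _ ≤ 2 * n := by linarith [abs_Psi_le x t t', mean_Psi_abs_le μ hs t t']
  have hptle : ∀ x : ∀ i, 𝒳 i, (⨆ p : {p : (∀ i, 𝒳 i → ℝ) × (∀ i, 𝒳 i → ℝ) //
      p.1 ∈ Sbar ∧ p.2 ∈ Sbar ∧ bH μ s p.1 ≤ y ∧ bH μ s p.2 ≤ y},
      |Psi x p.1.1 p.1.2 - ∫ x', Psi x' p.1.1 p.1.2 ∂(Plaw μ s)|) ≤ 2 * n := fun x =>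
    ciSup_le fun p => hZb p.1.1 p.1.2 x
  have hpt0 : ∀ x : ∀ i, 𝒳 i, 0 ≤ (⨆ p : {p : (∀ i, 𝒳 i → ℝ) × (∀ i, 𝒳 i → ℝ) //
      p.1 ∈ Sbar ∧ p.2 ∈ Sbar ∧ bH μ s p.1 ≤ y ∧ bH μ s p.2 ≤ y},
      |Psi x p.1.1 p.1.2 - ∫ x', Psi x' p.1.1 p.1.2 ∂(Plaw μ s)|) := by
    intro x
    obtain ⟨p0⟩ := hnon
    refine le_trans (abs_nonneg _) (le_ciSup (f := fun p : {p : (∀ i, 𝒳 i → ℝ) × (∀ i, 𝒳 i → ℝ) //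
      p.1 ∈ Sbar ∧ p.2 ∈ Sbar ∧ bH μ s p.1 ≤ y ∧ bH μ s p.2 ≤ y} =>
      |Psi x p.1.1 p.1.2 - ∫ x', Psi x' p.1.1 p.1.2 ∂(Plaw μ s)|) ⟨2 * n, ?_⟩ p0)
    rintro _ ⟨p, rfl⟩
    exact hZb p.1.1 p.1.2 x
  calc (∫ x, (⨆ p : {p : (∀ i, 𝒳 i → ℝ) × (∀ i, 𝒳 i → ℝ) //
        p.1 ∈ Sbar ∧ p.2 ∈ Sbar ∧ bH μ s p.1 ≤ y ∧ bH μ s p.2 ≤ y},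
        |Psi x p.1.1 p.1.2 - ∫ x', Psi x' p.1.1 p.1.2 ∂(Plaw μ s)|) ∂(Plaw μ s))
      ≤ ∫ _x, (2 * n : ℝ) ∂(Plaw μ s) :=
        integral_mono_of_nonneg (ae_of_all _ hpt0) (integrable_const _) (ae_of_all _ hptle)
    _ = 2 * n := by simp

lemma wS_le_mgf {Sbar : Set (∀ i, 𝒳 i → ℝ)} (hfin : Sbar.Finite)
    (hmodel : ∀ t ∈ Sbar, IsDensityT μ t)
    {s : ∀ i, 𝒳 i → ℝ} (hs : IsDensityT μ s) {y l : ℝ} (hl : 0 < l)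
    (hnon : Nonempty {p : (∀ i, 𝒳 i → ℝ) × (∀ i, 𝒳 i → ℝ) //
      p.1 ∈ Sbar ∧ p.2 ∈ Sbar ∧ bH μ s p.1 ≤ y ∧ bH μ s p.2 ≤ y}) :
    wS μ s Sbar y ≤ (Real.log (2 * (Sbar.ncard : ℝ) ^ 2)
      + (Real.exp (2 * l) / 2) * l ^ 2 * (4 * y ^ 2)) / l := by
  classical
  haveI : IsProbabilityMeasure (Plaw μ s) := Plaw_isProb μ hs
  set T := {p : (∀ i, 𝒳 i → ℝ) × (∀ i, 𝒳 i → ℝ) //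
      p.1 ∈ Sbar ∧ p.2 ∈ Sbar ∧ bH μ s p.1 ≤ y ∧ bH μ s p.2 ≤ y} with hT
  haveI hTfin : Finite T := by
    have h1 : {p : (∀ i, 𝒳 i → ℝ) × (∀ i, 𝒳 i → ℝ) |
        p.1 ∈ Sbar ∧ p.2 ∈ Sbar ∧ bH μ s p.1 ≤ y ∧ bH μ s p.2 ≤ y}.Finite :=
      Set.Finite.subset (hfin.prod hfin) fun p hp => ⟨hp.1, hp.2.1⟩
    exact h1.to_subtype
  haveI : Fintype T := Fintype.ofFinite T
  haveI hTne : Nonempty T := hnon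
  rw [wS, if_pos hnon]
  set Z : T → (∀ i, 𝒳 i) → ℝ :=
    fun p x => Psi x p.1.1 p.1.2 - ∫ x', Psi x' p.1.1 p.1.2 ∂(Plaw μ s) with hZdef
  have hZb : ∀ (p : T) (x : ∀ i, 𝒳 i), |Z p x| ≤ 2 * n := by
    intro p x
    calc |Z p x| ≤ |Psi x p.1.1 p.1.2| + |∫ x', Psi x' p.1.1 p.1.2 ∂(Plaw μ s)| := abs_sub _ _
      _ ≤ 2 * n := by
          linarith [abs_Psi_le x p.1.1 p.1.2, mean_Psi_abs_le μ hs p.1.1 p.1.2]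
  have hZm : ∀ p : T, Measurable (Z p) := by
    intro p
    exact (measurable_Psi (fun i => (hmodel _ p.2.1 i).1)
      (fun i => (hmodel _ p.2.2.1 i).1)).sub measurable_const
  set W : (∀ i, 𝒳 i) → ℝ :=
    fun x => ∑ p : T, (Real.exp (l * Z p x) + Real.exp (-(l * Z p x))) with hWdef
  set M := Fintype.card T with hM
  have hM1 : 1 ≤ M := Fintype.card_pos
  have hterm_ub : ∀ (p : T) (x : ∀ i, 𝒳 i),
      Real.exp (l * Z p x) ≤ Real.exp (l * (2 * n)) := by
    intro p x
    rw [Real.exp_le_exp]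
    apply mul_le_mul_of_nonneg_left _ hl.le
    linarith [le_abs_self (Z p x), hZb p x]
  have hterm_ub' : ∀ (p : T) (x : ∀ i, 𝒳 i),
      Real.exp (-(l * Z p x)) ≤ Real.exp (l * (2 * n)) := by
    intro p x
    rw [Real.exp_le_exp]
    have := mul_le_mul_of_nonneg_left (neg_abs_le (Z p x)) hl.le
    have h2 := mul_le_mul_of_nonneg_left (hZb p x) hl.le
    nlinarith [abs_nonneg (Z p x)]
  have hW_ub : ∀ x, W x ≤ M * (2 * Real.exp (l * (2 * n))) := by
    intro x
    calc W x ≤ ∑ _p : T, 2 * Real.exp (l * (2 * n)) :=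
          Finset.sum_le_sum fun p _ => by linarith [hterm_ub p x, hterm_ub' p x]
      _ = M * (2 * Real.exp (l * (2 * n))) := by
          rw [Finset.sum_const, Finset.card_univ, nsmul_eq_mul, hM]
  have hW_lb : ∀ x, (M : ℝ) * (2 * Real.exp (-(l * (2 * n)))) ≤ W x := by
    intro x
    have key : ∀ (p : T) (x : ∀ i, 𝒳 i),
        2 * Real.exp (-(l * (2 * n))) ≤ Real.exp (l * Z p x) + Real.exp (-(l * Z p x)) := by
      intro p x
      have e1 : Real.exp (-(l * (2 * n))) ≤ Real.exp (l * Z p x) := by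
        rw [Real.exp_le_exp]
        have := mul_le_mul_of_nonneg_left (neg_abs_le (Z p x)) hl.le
        have h2 := mul_le_mul_of_nonneg_left (hZb p x) hl.le
        nlinarith [abs_nonneg (Z p x)]
      have e2 : Real.exp (-(l * (2 * n))) ≤ Real.exp (-(l * Z p x)) := by
        rw [Real.exp_le_exp, neg_le_neg_iff]
        apply mul_le_mul_of_nonneg_left _ hl.le
        linarith [le_abs_self (Z p x), hZb p x]
      linarith
    calc (M : ℝ) * (2 * Real.exp (-(l * (2 * n))))
        = ∑ _p : T, 2 * Real.exp (-(l * (2 * n))) := by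
          rw [Finset.sum_const, Finset.card_univ, nsmul_eq_mul, hM]
      _ ≤ W x := Finset.sum_le_sum fun p _ => key p x
  have hWpos : ∀ x, 0 < W x := by
    intro x
    calc (0:ℝ) < (M : ℝ) * (2 * Real.exp (-(l * (2 * n)))) := by positivity
      _ ≤ W x := hW_lb x
  have hWm : Measurable W := by
    apply Finset.measurable_sum
    intro p _
    exact (((hZm p).const_mul l).exp).add (((hZm p).const_mul l).neg.exp)
  have hIntW : Integrable W (Plaw μ s) := by
    refine Integrable.mono' (integrable_const ((M : ℝ) * (2 * Real.exp (l * (2 * n)))))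
      hWm.aestronglyMeasurable (ae_of_all _ fun x => ?_)
    rw [Real.norm_eq_abs, abs_of_pos (hWpos x)]
    exact hW_ub x
  -- pointwise sup bound
  have hsup : ∀ x : ∀ i, 𝒳 i,
      (⨆ p : T, |Z p x|) ≤ l⁻¹ * Real.log (W x) := by
    intro x
    apply ciSup_le
    intro p
    have h1 : Real.exp (l * |Z p x|) ≤ W x := by
      have hmem : ∀ q : T, (0:ℝ) ≤ Real.exp (l * Z q x) + Real.exp (-(l * Z q x)) :=
        fun q => by positivity
      have hsingle : Real.exp (l * Z p x) + Real.exp (-(l * Z p x)) ≤ W x :=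
        Finset.single_le_sum (fun q _ => hmem q) (Finset.mem_univ p)
      rcases abs_cases (Z p x) with ⟨he, _⟩ | ⟨he, _⟩
      · rw [he]
        linarith [Real.exp_pos (-(l * Z p x))]
      · rw [he, show l * -Z p x = -(l * Z p x) from by ring]
        linarith [Real.exp_pos (l * Z p x)]
    have h2 : l * |Z p x| ≤ Real.log (W x) := by
      calc l * |Z p x| = Real.log (Real.exp (l * |Z p x|)) := (Real.log_exp _).symm
        _ ≤ Real.log (W x) := Real.log_le_log (Real.exp_pos _) h1
    calc |Z p x| = l⁻¹ * (l * |Z p x|) := by field_simp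
      _ ≤ l⁻¹ * Real.log (W x) := by
          apply mul_le_mul_of_nonneg_left h2 (inv_nonneg.2 hl.le)
  have hsup0 : ∀ x : ∀ i, 𝒳 i, 0 ≤ ⨆ p : T, |Z p x| := by
    intro x
    obtain ⟨p0⟩ := hTne
    refine le_trans (abs_nonneg _) (le_ciSup (f := fun p : T => |Z p x|) ⟨2 * n, ?_⟩ p0)
    rintro _ ⟨p, rfl⟩
    exact hZb p x
  -- integrability of log W
  have hlogWb : ∀ x, |Real.log (W x)| ≤
      |Real.log ((M : ℝ) * (2 * Real.exp (-(l * (2 * n)))))| +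
      |Real.log ((M : ℝ) * (2 * Real.exp (l * (2 * n))))| := by
    intro x
    have lb : Real.log ((M : ℝ) * (2 * Real.exp (-(l * (2 * n))))) ≤ Real.log (W x) :=
      Real.log_le_log (by positivity) (hW_lb x)
    have ub : Real.log (W x) ≤ Real.log ((M : ℝ) * (2 * Real.exp (l * (2 * n)))) :=
      Real.log_le_log (hWpos x) (hW_ub x)
    rw [abs_le]
    constructor
    · calc -(|Real.log ((M : ℝ) * (2 * Real.exp (-(l * (2 * n)))))| +
          |Real.log ((M : ℝ) * (2 * Real.exp (l * (2 * n))))|)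
          ≤ -|Real.log ((M : ℝ) * (2 * Real.exp (-(l * (2 * n)))))| := by
            linarith [abs_nonneg (Real.log ((M : ℝ) * (2 * Real.exp (l * (2 * n)))))]
        _ ≤ Real.log ((M : ℝ) * (2 * Real.exp (-(l * (2 * n))))) := neg_abs_le _
        _ ≤ Real.log (W x) := lb
    · calc Real.log (W x) ≤ Real.log ((M : ℝ) * (2 * Real.exp (l * (2 * n)))) := ub
        _ ≤ |Real.log ((M : ℝ) * (2 * Real.exp (l * (2 * n))))| := le_abs_self _
        _ ≤ _ := by
            linarith [abs_nonneg (Real.log ((M : ℝ) * (2 * Real.exp (-(l * (2 * n))))))]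
  have hIntlogW : Integrable (fun x => Real.log (W x)) (Plaw μ s) :=
    Integrable.mono' (integrable_const _) (hWm.log).aestronglyMeasurable
      (ae_of_all _ fun x => by rw [Real.norm_eq_abs]; exact hlogWb x)
  -- step A : wS ≤ l⁻¹ * ∫ log W
  have stepA : (∫ x, (⨆ p : T, |Z p x|) ∂(Plaw μ s))
      ≤ l⁻¹ * ∫ x, Real.log (W x) ∂(Plaw μ s) := by
    calc (∫ x, (⨆ p : T, |Z p x|) ∂(Plaw μ s))
        ≤ ∫ x, l⁻¹ * Real.log (W x) ∂(Plaw μ s) :=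
          integral_mono_of_nonneg (ae_of_all _ hsup0) (hIntlogW.const_mul l⁻¹)
            (ae_of_all _ hsup)
      _ = l⁻¹ * ∫ x, Real.log (W x) ∂(Plaw μ s) := integral_const_mul _ _
  -- step B : ∫ log W ≤ log (∫ W)
  set c := ∫ x, W x ∂(Plaw μ s) with hc
  have hclb : (M : ℝ) * (2 * Real.exp (-(l * (2 * n)))) ≤ c := by
    have := integral_mono (integrable_const ((M : ℝ) * (2 * Real.exp (-(l * (2 * n))))))
      hIntW (hW_lb)
    rwa [integral_const, probReal_univ, one_smul] at this
  have hcpos : 0 < c := lt_of_lt_of_le (by positivity) hclb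
  have stepB : ∫ x, Real.log (W x) ∂(Plaw μ s) ≤ Real.log c := by
    have hpt : ∀ x, Real.log (W x) ≤ Real.log c + (W x / c - 1) := by
      intro x
      have h1 : Real.log (W x / c) ≤ W x / c - 1 :=
        Real.log_le_sub_one_of_pos (div_pos (hWpos x) hcpos)
      have h2 : Real.log (W x / c) = Real.log (W x) - Real.log c :=
        Real.log_div (hWpos x).ne' hcpos.ne'
      linarith
    have hInt0 : Integrable (fun x => W x / c) (Plaw μ s) := hIntW.div_const c
    have hInt1 : Integrable (fun x => W x / c - 1) (Plaw μ s) := by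
      exact hInt0.sub (integrable_const 1)
    have hIntrhs : Integrable (fun x => Real.log c + (W x / c - 1)) (Plaw μ s) := by
      exact (integrable_const _).add hInt1
    have h5 := integral_mono hIntlogW hIntrhs hpt
    rw [integral_add (integrable_const _) hInt1,
      integral_sub hInt0 (integrable_const 1), integral_div,
      integral_const, integral_const, probReal_univ, one_smul,
      one_smul, ← hc, div_self hcpos.ne'] at h5
    simpa using h5
  -- step C : c ≤ 2 M exp(b)
  set b := (Real.exp (2 * l) / 2) * l ^ 2 * (4 * y ^ 2) with hb
  have hterm : ∀ p : T,
      (∫ x, Real.exp (l * Z p x) ∂(Plaw μ s)) ≤ Real.exp b := by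
    intro p
    have h := pair_mgf μ hs (hmodel _ p.2.1) (hmodel _ p.2.2.1) l p.2.2.2.1 p.2.2.2.2
    have habs : |l| = l := abs_of_pos hl
    rw [habs] at h
    exact h
  have hterm' : ∀ p : T,
      (∫ x, Real.exp (-(l * Z p x)) ∂(Plaw μ s)) ≤ Real.exp b := by
    intro p
    have h := pair_mgf μ hs (hmodel _ p.2.1) (hmodel _ p.2.2.1) (-l) p.2.2.2.1 p.2.2.2.2
    have habs : |(-l)| = l := by rw [abs_neg]; exact abs_of_pos hl
    rw [habs] at h
    have heq : ∀ x : ∀ i, 𝒳 i, (-l) * (Psi x p.1.1 p.1.2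
        - ∫ x', Psi x' p.1.1 p.1.2 ∂(Plaw μ s)) = -(l * Z p x) := by
      intro x; rw [hZdef]; ring
    simp only [heq] at h
    have heq2 : (Real.exp (2 * l) / 2) * (-l) ^ 2 * (4 * y ^ 2) = b := by rw [hb]; ring
    rwa [heq2] at h
  have hIntterm : ∀ p : T, Integrable (fun x => Real.exp (l * Z p x)) (Plaw μ s) := by
    intro p
    refine Integrable.mono' (integrable_const (Real.exp (l * (2 * n))))
      (((hZm p).const_mul l).exp).aestronglyMeasurable (ae_of_all _ fun x => ?_)
    rw [Real.norm_eq_abs, abs_of_pos (Real.exp_pos _)]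
    exact hterm_ub p x
  have hIntterm' : ∀ p : T, Integrable (fun x => Real.exp (-(l * Z p x))) (Plaw μ s) := by
    intro p
    refine Integrable.mono' (integrable_const (Real.exp (l * (2 * n))))
      (((hZm p).const_mul l).neg.exp).aestronglyMeasurable (ae_of_all _ fun x => ?_)
    rw [Real.norm_eq_abs, abs_of_pos (Real.exp_pos _)]
    exact hterm_ub' p x
  have hceq : c = ∑ p : T, ((∫ x, Real.exp (l * Z p x) ∂(Plaw μ s))
      + ∫ x, Real.exp (-(l * Z p x)) ∂(Plaw μ s)) := by
    rw [hc]
    have hWx : ∀ x, W x = ∑ p : T, (Real.exp (l * Z p x) + Real.exp (-(l * Z p x))) :=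
      fun x => rfl
    simp only [hWx]
    rw [integral_finset_sum _ fun p _ =>
      (show Integrable (fun x => Real.exp (l * Z p x) + Real.exp (-(l * Z p x)))
        (Plaw μ s) from (hIntterm p).add (hIntterm' p))]
    exact Finset.sum_congr rfl fun p _ => integral_add (hIntterm p) (hIntterm' p)
  have hcub : c ≤ (M : ℝ) * (2 * Real.exp b) := by
    rw [hceq]
    calc ∑ p : T, ((∫ x, Real.exp (l * Z p x) ∂(Plaw μ s))
        + ∫ x, Real.exp (-(l * Z p x)) ∂(Plaw μ s))
        ≤ ∑ _p : T, 2 * Real.exp b :=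
          Finset.sum_le_sum fun p _ => by linarith [hterm p, hterm' p]
      _ = (M : ℝ) * (2 * Real.exp b) := by
          rw [Finset.sum_const, Finset.card_univ, nsmul_eq_mul, hM]
  -- card bound : M ≤ ncard^2
  have hcard : (M : ℝ) ≤ (Sbar.ncard : ℝ) ^ 2 := by
    haveI : Fintype Sbar := hfin.fintype
    have hinj : Function.Injective (fun p : T =>
        ((⟨p.1.1, p.2.1⟩ : Sbar), (⟨p.1.2, p.2.2.1⟩ : Sbar))) := by
      intro p q hpq
      simp only [Prod.mk.injEq, Subtype.mk.injEq] at hpq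
      apply Subtype.ext
      exact Prod.ext hpq.1 hpq.2
    have h1 : M ≤ Fintype.card (Sbar × Sbar) := Fintype.card_le_of_injective _ hinj
    have h2 : Fintype.card (Sbar × Sbar) = Sbar.ncard * Sbar.ncard := by
      rw [Fintype.card_prod]
      congr 1 <;>
      · rw [← Nat.card_coe_set_eq, Nat.card_eq_fintype_card]
    have : (M:ℝ) ≤ (Sbar.ncard * Sbar.ncard : ℕ) := by exact_mod_cast h1.trans_eq h2
    push_cast at this
    nlinarith
  have hNpos : (0:ℝ) < (Sbar.ncard : ℝ) ^ 2 := by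
    have : (1:ℝ) ≤ M := by exact_mod_cast hM1
    nlinarith [hcard]
  have stepC : Real.log c ≤ Real.log (2 * (Sbar.ncard : ℝ) ^ 2) + b := by
    calc Real.log c ≤ Real.log ((Sbar.ncard : ℝ) ^ 2 * (2 * Real.exp b)) := by
          apply Real.log_le_log hcpos
          calc c ≤ (M : ℝ) * (2 * Real.exp b) := hcub
            _ ≤ (Sbar.ncard : ℝ) ^ 2 * (2 * Real.exp b) := by
                apply mul_le_mul_of_nonneg_right hcard (by positivity)
      _ = Real.log (2 * (Sbar.ncard : ℝ) ^ 2) + b := by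
          rw [show (Sbar.ncard : ℝ) ^ 2 * (2 * Real.exp b)
            = (2 * (Sbar.ncard : ℝ) ^ 2) * Real.exp b by ring,
            Real.log_mul (by positivity) (Real.exp_ne_zero b), Real.log_exp]
  -- put it all together
  calc (∫ x, (⨆ p : T, |Z p x|) ∂(Plaw μ s))
      ≤ l⁻¹ * ∫ x, Real.log (W x) ∂(Plaw μ s) := stepA
    _ ≤ l⁻¹ * (Real.log (2 * (Sbar.ncard : ℝ) ^ 2) + b) := by
        apply mul_le_mul_of_nonneg_left _ (inv_nonneg.2 hl.le)
        exact stepB.trans stepC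
    _ = (Real.log (2 * (Sbar.ncard : ℝ) ^ 2) + b) / l := by rw [inv_mul_eq_div]

end WS

lemma split_alg (a y E : ℝ) (ha : a ≠ 0) (hy : y ≠ 0) :
    (a ^ 2 + (E / 2) * ((7/10) * a / y) ^ 2 * (4 * y ^ 2)) / ((7/10) * a / y)
      = (10/7) * a * y + (7/5) * E * a * y := by
  field_simp
  ring

set_option maxHeartbeats 1000000 in
theorem statement_3
    {n : ℕ} {𝒳 : Fin n → Type*} [∀ i, MeasurableSpace (𝒳 i)]
    (μ : ∀ i, Measure (𝒳 i)) [∀ i, SigmaFinite (μ i)]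
    (Sbar : Set (∀ i, 𝒳 i → ℝ))
    (hfin : Sbar.Finite) (hne : Sbar.Nonempty)
    -- the model consists of density tuples
    (hmodel : ∀ t ∈ Sbar, IsDensityT μ t)
    -- the true density 𝐬 ∈ 𝕃
    (s : ∀ i, 𝒳 i → ℝ) (hs : IsDensityT μ s) :
    -- with S = S̄:
    epsS μ s Sbar ≤
      Real.sqrt ((1000 / 3) *
        min ((1 + 1000 * Real.sqrt 2) * Real.log (2 * (Sbar.ncard : ℝ) ^ 2)) (n : ℝ)) := by
  rw [epsS]
  apply Real.sSup_le _ (Real.sqrt_nonneg _)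
  intro y hy
  obtain ⟨hy1, hwlt⟩ := hy
  have hy0 : (0:ℝ) < y := lt_of_lt_of_le one_pos hy1
  have hN1 : 1 ≤ Sbar.ncard := (Set.ncard_pos hfin).2 hne
  have hN1R : (1:ℝ) ≤ (Sbar.ncard : ℝ) := by exact_mod_cast hN1
  set L := Real.log (2 * (Sbar.ncard : ℝ) ^ 2) with hL
  have hLlog2 : Real.log 2 ≤ L := Real.log_le_log (by norm_num) (by nlinarith)
  have hLpos : 0 < L := lt_of_lt_of_le (Real.log_pos (by norm_num)) hLlog2
  have hL7 : (69/100 : ℝ) ≤ L :=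
    le_trans (by linarith [Real.log_two_gt_d9]) hLlog2
  have hsqrt2 : (1414/1000:ℝ) ≤ Real.sqrt 2 := by
    rw [show (1414/1000:ℝ) = Real.sqrt ((1414/1000)^2) from
      (Real.sqrt_sq (by norm_num)).symm]
    apply Real.sqrt_le_sqrt
    norm_num
  set A := (1 + 1000 * Real.sqrt 2) * L with hA
  have hA0 : 471666 * L ≤ (1000/3) * A := by
    rw [hA]
    nlinarith [hLpos, hsqrt2]
  rw [Real.le_sqrt' hy0]
  -- two bounds
  have hbound_n : y ^ 2 ≤ (1000/3) * (n : ℝ) := by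
    by_cases hnon : Nonempty {p : (∀ i, 𝒳 i → ℝ) × (∀ i, 𝒳 i → ℝ) //
        p.1 ∈ Sbar ∧ p.2 ∈ Sbar ∧ bH μ s p.1 ≤ y ∧ bH μ s p.2 ≤ y}
    · have h2n := wS_le_two_n μ hs hnon
      nlinarith
    · have hwS : wS μ s Sbar y = 1 := by rw [wS, if_neg hnon]
      rw [hwS] at hwlt
      have hn1 : 1 ≤ n := by
        by_contra hn
        push_neg at hn
        have hn0 : n = 0 := by omega
        apply hnon
        obtain ⟨t0, ht0⟩ := hne
        haveI : IsEmpty (Fin n) := by rw [hn0]; infer_instance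
        have hbH : bH μ s t0 = 0 := by
          rw [bH, Finset.univ_eq_empty, Finset.sum_empty, Real.sqrt_zero]
        exact ⟨⟨(t0, t0), ht0, ht0, by rw [hbH]; linarith, by rw [hbH]; linarith⟩⟩
      have hn1R : (1:ℝ) ≤ (n:ℝ) := by exact_mod_cast hn1
      nlinarith
  have hbound_A : y ^ 2 ≤ (1000/3) * A := by
    by_cases hnon : Nonempty {p : (∀ i, 𝒳 i → ℝ) × (∀ i, 𝒳 i → ℝ) //
        p.1 ∈ Sbar ∧ p.2 ∈ Sbar ∧ bH μ s p.1 ≤ y ∧ bH μ s p.2 ≤ y}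
    · by_contra hcon
      push_neg at hcon
      have hyL : 471666 * L < y ^ 2 := lt_of_le_of_lt hA0 hcon
      set a := Real.sqrt L with ha
      have ha2 : a ^ 2 = L := Real.sq_sqrt hLpos.le
      have hapos : 0 < a := Real.sqrt_pos.2 hLpos
      have h600 : 600 * a < y := by
        by_contra h6
        push_neg at h6
        nlinarith
      set l := (7/10) * a / y with hl
      have hlpos : 0 < l := by positivity
      have h2l : 2 * l ≤ 7/3000 := by
        rw [hl, show 2 * ((7/10) * a / y) = (7/5) * a / y from by ring, div_le_iff₀ hy0]
        linarith
      have hexpb : Real.exp (2 * l) ≤ 101/100 := by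
        have h1 : 1 - 2 * l ≤ Real.exp (-(2 * l)) := by
          linarith [Real.add_one_le_exp (-(2 * l))]
        have h2 : Real.exp (2 * l) * (1 - 2 * l) ≤ 1 := by
          calc Real.exp (2 * l) * (1 - 2 * l)
              ≤ Real.exp (2 * l) * Real.exp (-(2 * l)) :=
                mul_le_mul_of_nonneg_left h1 (Real.exp_nonneg _)
            _ = 1 := by rw [← Real.exp_add]; simp
        nlinarith [Real.exp_pos (2 * l),
          mul_le_mul_of_nonneg_left h2l (Real.exp_pos (2 * l)).le]
      have hmgf := wS_le_mgf μ hfin hmodel hs hlpos hnon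
      have hcomb : 6/1000 * y ^ 2
          < (L + (Real.exp (2 * l) / 2) * l ^ 2 * (4 * y ^ 2)) / l :=
        lt_of_lt_of_le hwlt hmgf
      have hsplit : (L + (Real.exp (2 * l) / 2) * l ^ 2 * (4 * y ^ 2)) / l
          = (10/7) * a * y + (7/5) * Real.exp (2 * l) * a * y := by
        rw [← ha2, hl]
        exact split_alg a y _ hapos.ne' hy0.ne'
      rw [hsplit] at hcomb
      have hq := mul_pos hapos hy0
      have hfinal : 6/1000 * y ^ 2 < (10/7) * (a * y) + (707/500) * (a * y) := by
        have hE : (7/5) * Real.exp (2 * l) * a * y ≤ (707/500) * (a * y) := by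
          nlinarith [mul_le_mul_of_nonneg_right hexpb hq.le]
        nlinarith
      have h600y : 600 * (a * y) < y ^ 2 := by nlinarith
      nlinarith
    · have hwS : wS μ s Sbar y = 1 := by rw [wS, if_neg hnon]
      rw [hwS] at hwlt
      nlinarith
  rcases le_total A (n:ℝ) with hmin | hmin
  · rw [min_eq_left hmin]; exact hbound_A
  · rw [min_eq_right hmin]; exact hbound_n


end
end

section
/- Let S̄ be an ε-net for a totally bounded subset S̃ of (𝕃,𝐡) satisfying the metric-dimension cardinality bound |{𝐭∈S̄ : 𝐡(𝐬,𝐭)≤r}| ≤ exp[𝐃(ε)(r/ε)²] for all 𝐬∈𝕃 and r≥2ε, and let π be the uniform distribution on the finite set S̄. If ε ≥ 1/2 satisfies 𝐃(ε) ≤ (γ/4)ε², then η^{S̄,π}(𝐭) ≤ ε for every 𝐭∈S̄. -/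
open MeasureTheory Real Filter Set
open scoped Classical ENNReal

noncomputable section

/-- `η^{S̄,π}(𝐭) = inf{r ≥ 0 : π(B^{S̄}(𝐭,2r′)) ≤ exp(γr′²)·π(B^{S̄}(𝐭,r′)) for all r′ ≥ r}`. -/
def etaS {n : ℕ} {𝒳 : Fin n → Type*} [∀ i, MeasurableSpace (𝒳 i)]
    (μ : ∀ i, Measure (𝒳 i)) (Sbar : Set (∀ i, 𝒳 i → ℝ))
    {mS : MeasurableSpace (∀ i, 𝒳 i → ℝ)} (pr : Measure (∀ i, 𝒳 i → ℝ))
    (γ : ℝ) (t : ∀ i, 𝒳 i → ℝ) : ℝ :=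
  sInf {r : ℝ | 0 ≤ r ∧ ∀ r' ≥ r,
    pr {u ∈ Sbar | bH μ t u ≤ 2 * r'} ≤
      ENNReal.ofReal (Real.exp (γ * r' ^ 2)) * pr {u ∈ Sbar | bH μ t u ≤ r'}}


lemma bH_self {n : ℕ} {𝒳 : Fin n → Type*} [∀ i, MeasurableSpace (𝒳 i)]
    (μ : ∀ i, Measure (𝒳 i)) (t : ∀ i, 𝒳 i → ℝ) : bH μ t t = 0 := by
  simp [bH, hellSq]

lemma count_restrict_top_eq {α : Type*} (S A : Set α) (hA : A ⊆ S) (hfin : A.Finite) :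
    (@MeasureTheory.Measure.count α ⊤).restrict S A = (A.ncard : ℝ≥0∞) := by
  letI : MeasurableSpace α := ⊤
  rw [Measure.restrict_apply (by trivial), Set.inter_eq_self_of_subset_left hA,
    Measure.count_apply_finite' hfin (by trivial), Set.ncard_eq_toFinset_card A hfin]

theorem statement_9
    {n : ℕ} {𝒳 : Fin n → Type*} [∀ i, MeasurableSpace (𝒳 i)]
    (μ : ∀ i, Measure (𝒳 i)) [∀ i, SigmaFinite (μ i)]
    (β : ℝ) (hβ : 0 < β)
    -- S̄ is a finite ε-net for a set S̃ ⊂ 𝕃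
    (St Sbar : Set (∀ i, 𝒳 i → ℝ)) (hfin : Sbar.Finite)
    (hSbar : ∀ t ∈ Sbar, IsDensityT μ t) (hSt : ∀ t ∈ St, IsDensityT μ t)
    (ε : ℝ) (hε : 1 / 2 ≤ ε)
    (hnet : ∀ t ∈ St, ∃ u ∈ Sbar, bH μ t u ≤ ε)
    -- the metric-dimension cardinality bound for S̄
    (D : ℝ → ℝ)
    (hcard : ∀ s : ∀ i, 𝒳 i → ℝ, IsDensityT μ s → ∀ r : ℝ, 2 * ε ≤ r →
      ({t ∈ Sbar | bH μ s t ≤ r}.ncard : ℝ) ≤ Real.exp (D ε * (r / ε) ^ 2))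
    -- 𝐃(ε) ≤ (γ/4)ε² with γ = β/8
    (hDε : D ε ≤ β / 8 / 4 * ε ^ 2) :
    -- π is the uniform distribution on S̄
    ∀ t ∈ Sbar,
      etaS μ Sbar
        ((Sbar.ncard : ℝ≥0∞)⁻¹ •
          (@MeasureTheory.Measure.count (∀ i, 𝒳 i → ℝ) ⊤).restrict Sbar)
        (β / 8) t ≤ ε := by
  intro t ht
  set γ := β / 8 with hγ
  have hε0 : 0 < ε := lt_of_lt_of_le (by norm_num) hε
  have hεne : ε ≠ 0 := ne_of_gt hε0
  apply csInf_le ⟨0, fun x hx => hx.1⟩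
  refine ⟨le_of_lt hε0, fun r' hr' => ?_⟩
  have hr'0 : 0 < r' := lt_of_lt_of_le hε0 hr'
  set B2 : Set (∀ i, 𝒳 i → ℝ) := {u ∈ Sbar | bH μ t u ≤ 2 * r'} with hB2
  set B1 : Set (∀ i, 𝒳 i → ℝ) := {u ∈ Sbar | bH μ t u ≤ r'} with hB1
  have hB2sub : B2 ⊆ Sbar := fun u hu => hu.1
  have hB1sub : B1 ⊆ Sbar := fun u hu => hu.1
  have hB2fin : B2.Finite := hfin.subset hB2sub
  have hB1fin : B1.Finite := hfin.subset hB1sub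
  have hm2 : (@MeasureTheory.Measure.count (∀ i, 𝒳 i → ℝ) ⊤).restrict Sbar B2 =
      (B2.ncard : ℝ≥0∞) := count_restrict_top_eq Sbar B2 hB2sub hB2fin
  have htB1 : t ∈ B1 := ⟨ht, by rw [bH_self]; exact le_of_lt hr'0⟩
  have hm1 : (1 : ℝ≥0∞) ≤ (@MeasureTheory.Measure.count (∀ i, 𝒳 i → ℝ) ⊤).restrict Sbar B1 := by
    have h1 : (@MeasureTheory.Measure.count (∀ i, 𝒳 i → ℝ) ⊤).restrict Sbar {t} =
        (({t} : Set (∀ i, 𝒳 i → ℝ)).ncard : ℝ≥0∞) :=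
      count_restrict_top_eq Sbar {t} (by simpa using ht) (Set.finite_singleton t)
    have : (@MeasureTheory.Measure.count (∀ i, 𝒳 i → ℝ) ⊤).restrict Sbar {t} ≤
        (@MeasureTheory.Measure.count (∀ i, 𝒳 i → ℝ) ⊤).restrict Sbar B1 :=
      measure_mono (by simpa using htB1)
    simpa [h1] using this
  -- cardinality bound
  have hcard' : (B2.ncard : ℝ) ≤ Real.exp (γ * r' ^ 2) := by
    have h1 := hcard t (hSbar t ht) (2 * r') (by linarith)
    refine h1.trans (Real.exp_le_exp.2 ?_)
    have h2 : D ε * (2 * r' / ε) ^ 2 ≤ (γ / 4 * ε ^ 2) * (2 * r' / ε) ^ 2 :=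
      mul_le_mul_of_nonneg_right hDε (sq_nonneg _)
    have h3 : (γ / 4 * ε ^ 2) * (2 * r' / ε) ^ 2 = γ * r' ^ 2 := by
      field_simp
      ring
    linarith
  have hB2le : (B2.ncard : ℝ≥0∞) ≤ ENNReal.ofReal (Real.exp (γ * r' ^ 2)) := by
    rw [show ((B2.ncard : ℝ≥0∞)) = ENNReal.ofReal (B2.ncard : ℝ) by
      simp [ENNReal.ofReal_natCast]]
    exact ENNReal.ofReal_le_ofReal hcard'
  -- conclude
  show ((Sbar.ncard : ℝ≥0∞)⁻¹ • (@MeasureTheory.Measure.count (∀ i, 𝒳 i → ℝ) ⊤).restrict Sbar) B2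
      ≤ ENNReal.ofReal (Real.exp (γ * r' ^ 2)) *
        ((Sbar.ncard : ℝ≥0∞)⁻¹ • (@MeasureTheory.Measure.count (∀ i, 𝒳 i → ℝ) ⊤).restrict Sbar) B1
  rw [Measure.smul_apply, Measure.smul_apply, smul_eq_mul, smul_eq_mul, hm2]
  calc (Sbar.ncard : ℝ≥0∞)⁻¹ * (B2.ncard : ℝ≥0∞)
      ≤ (Sbar.ncard : ℝ≥0∞)⁻¹ * ENNReal.ofReal (Real.exp (γ * r' ^ 2)) :=
        mul_le_mul_right hB2le _
    _ = ENNReal.ofReal (Real.exp (γ * r' ^ 2)) * ((Sbar.ncard : ℝ≥0∞)⁻¹ * 1) := by ring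
    _ ≤ _ := mul_le_mul_right (mul_le_mul_right hm1 _) _


end
end

section
/- Let 0<ξ<1 and let ν be the probability on ℝ with density g(z) = (ξ/2)|z|^{ξ−1}·1_{[−1,1]}(z) with respect to Lebesgue measure. For θ∈[−1,1] and x>0, set I₁ = [(θ−x)∨(−1), (θ+x)∧1] and I₂ = [(θ−2x)∨(−1), (θ+2x)∧1]. Then ν(I₂) ≤ κ₀·ν(I₁) with κ₀ = 2^{1+ξ}/(2^ξ − 1). -/
open MeasureTheory Real Set
open scoped Classical ENNReal

noncomputable section

namespace Stmt11


def F (ξ t : ℝ) : ℝ := (min (max t 0) 1) ^ ξ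
def ψ (ξ t : ℝ) : ℝ := (F ξ t - F ξ (-t)) / 2

variable {ξ : ℝ}

lemma clamp_nonneg (t : ℝ) : 0 ≤ min (max t 0) 1 := le_min (le_max_right _ _) zero_le_one
lemma clamp_le_one (t : ℝ) : min (max t 0) 1 ≤ 1 := min_le_right _ _
lemma F_nonneg (t : ℝ) : 0 ≤ F ξ t := Real.rpow_nonneg (clamp_nonneg t) _
lemma F_le_one (hξ0 : 0 < ξ) (t : ℝ) : F ξ t ≤ 1 :=
  Real.rpow_le_one (clamp_nonneg t) (clamp_le_one t) hξ0.le
lemma F_mono (hξ0 : 0 < ξ) {t s : ℝ} (h : t ≤ s) : F ξ t ≤ F ξ s :=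
  Real.rpow_le_rpow (clamp_nonneg t) (min_le_min (max_le_max h le_rfl) le_rfl) hξ0.le
lemma F_of_nonpos (hξ0 : 0 < ξ) {t : ℝ} (h : t ≤ 0) : F ξ t = 0 := by
  have : max t 0 = 0 := max_eq_right h
  simp [F, this, Real.zero_rpow hξ0.ne']
lemma F_of_mem {t : ℝ} (h0 : 0 ≤ t) (h1 : t ≤ 1) : F ξ t = t ^ ξ := by
  rw [F, max_eq_left h0, min_eq_left h1]
lemma F_of_ge_one {t : ℝ} (h : 1 ≤ t) : F ξ t = 1 := by
  have h0 : max t 0 = t := max_eq_left (le_trans zero_le_one h)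
  rw [F, h0, min_eq_right h, Real.one_rpow]
lemma psi_neg (t : ℝ) : ψ ξ (-t) = - ψ ξ t := by simp [ψ]; ring
lemma psi_of_nonneg (hξ0 : 0 < ξ) {t : ℝ} (h : 0 ≤ t) : ψ ξ t = F ξ t / 2 := by
  rw [ψ, F_of_nonpos hξ0 (neg_nonpos.mpr h)]; ring
lemma psi_mono (hξ0 : 0 < ξ) {t s : ℝ} (h : t ≤ s) : ψ ξ t ≤ ψ ξ s := by
  have h1 := F_mono hξ0 h
  have h2 := F_mono hξ0 (neg_le_neg h)
  rw [ψ, ψ]; linarith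
lemma young (hξ0 : 0 < ξ) (hξ1 : ξ < 1) {t : ℝ} (ht : 0 ≤ t) :
    t ^ ξ ≤ ξ * t + (1 - ξ) := by
  have := Real.geom_mean_le_arith_mean2_weighted hξ0.le (by linarith : (0:ℝ) ≤ 1 - ξ)
    ht zero_le_one (by ring)
  simpa [Real.one_rpow] using this
lemma conc (hξ0 : 0 < ξ) (hξ1 : ξ < 1) {p q w v : ℝ} (hp : 0 ≤ p) (hq : 0 ≤ q)
    (hw : 0 ≤ w) (hv : 0 ≤ v) (hwv : w + v = 1) :
    w * p ^ ξ + v * q ^ ξ ≤ (w * p + v * q) ^ ξ := by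
  have := (Real.concaveOn_rpow hξ0.le hξ1.le).2 (mem_Ici.mpr hp) (mem_Ici.mpr hq) hw hv hwv
  simpa using this

lemma u_pos (hξ0 : 0 < ξ) : (1:ℝ) < (2:ℝ)^ξ := by
  rw [show (1:ℝ) = (2:ℝ)^(0:ℝ) by simp]
  exact Real.rpow_lt_rpow_of_exponent_lt one_lt_two hξ0
lemma u_le_two (hξ1 : ξ ≤ 1) : (2:ℝ)^ξ ≤ 2 := by
  calc (2:ℝ)^ξ ≤ (2:ℝ)^(1:ℝ) := Real.rpow_le_rpow_of_exponent_le one_le_two hξ1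
  _ = 2 := Real.rpow_one 2
lemma u_one_sub (hξ0 : 0 < ξ) (hξ1 : ξ < 1) : (2:ℝ)^ξ * (1 - ξ) ≤ 1 := by
  have h1 : (2:ℝ)^ξ = Real.exp (Real.log 2 * ξ) := by
    rw [Real.rpow_def_of_pos two_pos]
  have h2 : Real.log 2 * ξ ≤ ξ := by
    nlinarith [Real.log_two_lt_d9, hξ0]
  have h3 : (2:ℝ)^ξ ≤ Real.exp ξ := by rw [h1]; exact Real.exp_le_exp.mpr h2
  have h4 : 1 - ξ ≤ Real.exp (-ξ) := by
    have := Real.add_one_le_exp (-ξ); linarith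
  calc (2:ℝ)^ξ * (1-ξ) ≤ Real.exp ξ * Real.exp (-ξ) := by
        apply mul_le_mul h3 h4 (by linarith) (Real.exp_nonneg _)
    _ = 1 := by rw [← Real.exp_add]; simp

lemma F_le_rpow (hξ0 : 0 < ξ) {t : ℝ} (ht : 0 ≤ t) : F ξ t ≤ t ^ ξ :=
  Real.rpow_le_rpow (clamp_nonneg t) (le_trans (min_le_left _ _) (le_of_eq (max_eq_left ht))) hξ0.le

lemma F_double (hξ0 : 0 < ξ) (t : ℝ) : F ξ (2*t) ≤ (2:ℝ)^ξ * F ξ t := by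
  have h1 : min (max (2*t) 0) 1 ≤ 2 * min (max t 0) 1 := by
    rcases le_total t 0 with h | h
    · rw [max_eq_right h, max_eq_right (by linarith : 2*t ≤ 0)]; norm_num
    · rw [max_eq_left h, max_eq_left (by linarith : (0:ℝ) ≤ 2*t)]
      rcases le_total (2*t) 1 with h2 | h2
      · rw [min_eq_left h2, min_eq_left (by linarith : t ≤ 1)]
      · rw [min_eq_right h2]
        have : (1:ℝ)/2 ≤ min t 1 := le_min (by linarith) (by norm_num)
        linarith
  calc F ξ (2*t) ≤ (2 * min (max t 0) 1) ^ ξ :=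
        Real.rpow_le_rpow (clamp_nonneg _) h1 hξ0.le
    _ = (2:ℝ)^ξ * F ξ t := Real.mul_rpow (by norm_num) (clamp_nonneg t)

lemma F_midpoint (hξ0 : 0 < ξ) (hξ1 : ξ < 1) {p h : ℝ} (hp : 0 ≤ p) (hh : 0 ≤ h) :
    F ξ p + F ξ (p + 2*h) ≤ 2 * F ξ (p + h) := by
  rcases le_or_gt 1 (p + h) with h1 | h1
  · have := F_le_one hξ0 (ξ := ξ) p
    have := F_le_one hξ0 (ξ := ξ) (p + 2*h)
    rw [F_of_ge_one h1]; linarith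
  · have hFp : F ξ p = p ^ ξ := F_of_mem hp (by linarith)
    have hFm : F ξ (p + h) = (p + h) ^ ξ := F_of_mem (by linarith) h1.le
    have hFq : F ξ (p + 2*h) ≤ (p + 2*h) ^ ξ := F_le_rpow hξ0 (by linarith)
    have hc := conc hξ0 hξ1 hp (by linarith : (0:ℝ) ≤ p + 2*h)
      (by norm_num : (0:ℝ) ≤ 1/2) (by norm_num : (0:ℝ) ≤ 1/2) (by norm_num)
    rw [show (1:ℝ)/2 * p + 1/2 * (p + 2*h) = p + h by ring] at hc
    rw [hFp, hFm]; linarith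

lemma claimC (hξ0 : 0 < ξ) (hξ1 : ξ < 1) {a : ℝ} (ha0 : 0 ≤ a) (ha : a ≤ 1/2) :
    ((2:ℝ)^ξ + 1) * a^ξ + ((2:ℝ)^ξ - 1) * (1 - 2*a)^ξ ≤ 2 := by
  set u := (2:ℝ)^ξ with hu
  have hu1 : 1 < u := u_pos hξ0
  have hu2 : u ≤ 2 := u_le_two hξ1.le
  have hu3 : u * (1 - ξ) ≤ 1 := u_one_sub hξ0 hξ1
  have h2a : (0:ℝ) ≤ 1 - 2*a := by linarith
  have hY1 : u * a^ξ ≤ ξ * (2*a) + (1 - ξ) := by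
    have h := young hξ0 hξ1 (by linarith : (0:ℝ) ≤ 2*a)
    rwa [Real.mul_rpow (by norm_num : (0:ℝ) ≤ 2) ha0] at h
  have hY2 : (1 - 2*a)^ξ ≤ ξ * (1 - 2*a) + (1 - ξ) := young hξ0 hξ1 h2a
  have hP : 0 ≤ a^ξ := Real.rpow_nonneg ha0 _
  have hQ : 0 ≤ (1-2*a)^ξ := Real.rpow_nonneg h2a _
  have hA : 0 ≤ (u - 1) * (u*ξ - (u-1)) :=
    mul_nonneg (by linarith) (by nlinarith)
  have hB : 0 ≤ ξ * (1 - 2*a) * (2*u + 1 - u^2) :=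
    mul_nonneg (mul_nonneg hξ0.le h2a) (by nlinarith)
  have h5 : (u+1) * (u * a^ξ) ≤ (u+1) * (ξ*(2*a) + (1-ξ)) :=
    mul_le_mul_of_nonneg_left hY1 (by linarith)
  have h6 : (u-1) * u * (1-2*a)^ξ ≤ (u-1) * u * (ξ*(1-2*a) + (1-ξ)) :=
    mul_le_mul_of_nonneg_left hY2 (by nlinarith)
  have hkey : u * (((u+1) * a^ξ + (u-1) * (1-2*a)^ξ)) ≤ u * 2 := by nlinarith
  exact le_of_mul_le_mul_left hkey (by linarith)


lemma caseIIIa (hξ0 : 0 < ξ) (hξ1 : ξ < 1) {a x : ℝ} (ha0 : 0 < a) (hx : 0 < x)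
    (hxa : x < a) :
    ((2:ℝ)^ξ - 1) * (a^ξ - (a-x)^ξ) ≤ 2 * ((a+2*x)^ξ - a^ξ) := by
  set u := (2:ℝ)^ξ with hu
  have hu1 : 1 < u := u_pos hξ0
  have haξ : 0 ≤ a ^ ξ := Real.rpow_nonneg ha0.le _
  have hr0 : 0 ≤ x / a := div_nonneg hx.le ha0.le
  have hr1 : x / a ≤ 1 := by rw [div_le_one ha0]; linarith
  have hrx : (x / a) * a = x := by field_simp
  have hch := conc hξ0 hξ1 ha0.le (by linarith : (0:ℝ) ≤ 3*a)
    (by linarith : (0:ℝ) ≤ 1 - x/a) hr0 (by ring)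
  have hptr : (1 - x/a) * a + (x/a) * (3*a) = a + 2*x := by
    have e : (1 - x/a) * a + (x/a) * (3*a) = a + 2*((x/a)*a) := by ring
    rw [e, hrx]
  rw [hptr, Real.mul_rpow (by norm_num : (0:ℝ) ≤ 3) ha0.le] at hch
  have h32 : u ≤ (3:ℝ)^ξ := Real.rpow_le_rpow (by norm_num) (by norm_num) hξ0.le
  have hch' : a^ξ + (x/a)*(u-1)*a^ξ ≤ (a+2*x)^ξ := by
    nlinarith [hch, mul_le_mul_of_nonneg_right h32 (mul_nonneg hr0 haξ)]
  have hlow : a^ξ - (a-x)^ξ ≤ (x/a) * a^ξ := by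
    have hb0 : 0 < (a - x)/a := div_pos (by linarith) ha0
    have hb1 : (a - x)/a ≤ 1 := by rw [div_le_one ha0]; linarith
    have h1 : (1 - x/a) ≤ ((a - x)/a) ^ ξ := by
      calc (1 - x/a) = (a-x)/a := by field_simp
        _ = ((a-x)/a) ^ (1:ℝ) := (Real.rpow_one _).symm
        _ ≤ ((a-x)/a) ^ ξ := Real.rpow_le_rpow_of_exponent_ge hb0 hb1 hξ1.le
    have h2 : ((a - x)/a) ^ ξ * a ^ ξ = (a - x) ^ ξ := by
      rw [← Real.mul_rpow (div_nonneg (by linarith) ha0.le) ha0.le]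
      congr 1; field_simp
    have h3 : (1 - x/a) * a^ξ ≤ (a-x)^ξ := by
      rw [← h2]; exact mul_le_mul_of_nonneg_right h1 haξ
    nlinarith [h3]
  have hfin1 := mul_le_mul_of_nonneg_left hlow (by linarith : (0:ℝ) ≤ u - 1)
  have hfin2 : 0 ≤ (x/a) * (u-1) * a^ξ := mul_nonneg (mul_nonneg hr0 (by linarith)) haξ
  nlinarith [hfin1, hfin2, hch']

lemma caseIIIb (hξ0 : 0 < ξ) (hξ1 : ξ < 1) {a x : ℝ} (ha0 : 0 < a) (ha1 : a < 1)
    (hx : 0 < x) (hxa : x < a) (hsum : a + x ≤ 1) :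
    ((2:ℝ)^ξ - 1) * (a^ξ - (a-x)^ξ) ≤ 2 * (1 - a^ξ) := by
  set u := (2:ℝ)^ξ with hu
  have hu1 : 1 < u := u_pos hξ0
  have hB : ξ * x ≤ 1 - a ^ ξ := by
    have hY := young hξ0 hξ1 ha0.le
    nlinarith
  rcases le_or_gt a (2/3) with hsp | hsp
  · -- a ≤ 2/3
    have h1 : a ^ ξ ≤ (2/3 : ℝ) ^ ξ := Real.rpow_le_rpow ha0.le hsp hξ0.le
    have h23 : ((2:ℝ)/3) ^ ξ = u / (3:ℝ)^ξ := by
      rw [Real.div_rpow (by norm_num : (0:ℝ) ≤ 2) (by norm_num : (0:ℝ) ≤ 3)]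
    have hmid := conc hξ0 hξ1 (by norm_num : (0:ℝ) ≤ 2) (by norm_num : (0:ℝ) ≤ 4)
      (by norm_num : (0:ℝ) ≤ 1/2) (by norm_num : (0:ℝ) ≤ 1/2) (by norm_num)
    rw [show (1:ℝ)/2 * 2 + 1/2 * 4 = 3 by norm_num] at hmid
    have h44 : ((4:ℝ)) ^ ξ = u * u := by
      rw [show (4:ℝ) = 2*2 by norm_num, Real.mul_rpow (by norm_num) (by norm_num), hu]
    have h3pos : (0:ℝ) < (3:ℝ)^ξ := Real.rpow_pos_of_pos (by norm_num) _
    have hkey : (u + 1) * a ^ ξ ≤ 2 := by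
      have h5 : (u+1) * a^ξ ≤ (u+1) * (u / (3:ℝ)^ξ) := by
        rw [← h23]; exact mul_le_mul_of_nonneg_left h1 (by linarith)
      have h6 : (u+1) * (u / (3:ℝ)^ξ) ≤ 2 := by
        rw [← mul_div_assoc, div_le_iff₀ h3pos]
        nlinarith [hmid, h44]
      linarith
    have hyξ : 0 ≤ (a - x) ^ ξ := Real.rpow_nonneg (by linarith) _
    nlinarith [hkey]
  · -- a > 2/3
    have hy13 : 1/3 < a - x := by linarith
    have hyp : 0 < a - x := by linarith
    have h3pos : (0:ℝ) < (3:ℝ)^ξ := Real.rpow_pos_of_pos (by norm_num) _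
    have hyξ : 0 ≤ (a - x) ^ ξ := Real.rpow_nonneg hyp.le _
    have hup : a ^ ξ ≤ (a-x) ^ ξ + ξ * (x / (a-x)) * (a-x) ^ ξ := by
      have hY := young hξ0 hξ1 (show (0:ℝ) ≤ a / (a-x) by positivity)
      have h2 : (a/(a-x)) ^ ξ * (a-x) ^ ξ = a ^ ξ := by
        rw [← Real.mul_rpow (by positivity) hyp.le]
        congr 1; field_simp
      have h3 : (a/(a-x))^ξ * (a-x)^ξ ≤ (ξ * (a/(a-x)) + (1-ξ)) * (a-x)^ξ :=
        mul_le_mul_of_nonneg_right hY hyξ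
      rw [h2] at h3
      have h4 : a / (a-x) = 1 + x / (a-x) := by field_simp; ring
      rw [h4] at h3
      nlinarith [h3]
    have hyy : (3:ℝ)^ξ * (a-x)^ξ ≤ 3 * (a-x) := by
      have h1 : ((3:ℝ)*(a-x)) ^ ξ ≤ 3*(a-x) := by
        calc ((3:ℝ)*(a-x))^ξ ≤ ((3:ℝ)*(a-x))^(1:ℝ) :=
              Real.rpow_le_rpow_of_exponent_le (by linarith) hξ1.le
          _ = 3*(a-x) := Real.rpow_one _
      rwa [Real.mul_rpow (by norm_num) hyp.le] at h1
    have h3u : 3 * (u - 1) ≤ 2 * (3:ℝ)^ξ := by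
      have hub : u ≤ 1 + ξ := by
        have := young hξ0 hξ1 (show (0:ℝ) ≤ 2 by norm_num)
        rw [hu]; linarith
      have hlb : 1 + ξ ≤ (3:ℝ)^ξ := by
        have h1 : (3:ℝ)^ξ = Real.exp (Real.log 3 * ξ) := by
          rw [Real.rpow_def_of_pos (by norm_num)]
        have h2 : 1 ≤ Real.log 3 := by
          have h3 : Real.exp 1 ≤ 3 := by
            have := Real.exp_one_lt_d9; linarith
          have := Real.log_le_log (Real.exp_pos 1) h3
          rwa [Real.log_exp] at this
        have h4 : ξ ≤ Real.log 3 * ξ := by nlinarith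
        have h5 : 1 + Real.log 3 * ξ ≤ Real.exp (Real.log 3 * ξ) := by
          have := Real.add_one_le_exp (Real.log 3 * ξ); linarith
        rw [h1]; linarith
      linarith
    have hq : a^ξ - (a-x)^ξ ≤ ξ * x * (3 / (3:ℝ)^ξ) := by
      have hdiv : (a-x)^ξ/(a-x) ≤ 3/(3:ℝ)^ξ := by
        rw [div_le_div_iff₀ hyp h3pos]; nlinarith [hyy]
      have h1 : ξ * (x/(a-x)) * (a-x)^ξ ≤ ξ * x * (3 / (3:ℝ)^ξ) := by
        have e : ξ * (x/(a-x)) * (a-x)^ξ = (ξ*x) * ((a-x)^ξ/(a-x)) := by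
          field_simp
        have h1' := mul_le_mul_of_nonneg_left hdiv (mul_nonneg hξ0.le hx.le)
        rw [e]; linarith [h1']
      linarith [hup, h1]
    have h7 : (u-1) * (a^ξ - (a-x)^ξ) ≤ (u-1) * (ξ * x * (3 / (3:ℝ)^ξ)) :=
      mul_le_mul_of_nonneg_left hq (by linarith)
    have h8 : (u-1) * (ξ * x * (3 / (3:ℝ)^ξ)) ≤ 2 * (ξ * x) := by
      rw [div_eq_mul_inv]
      have hinv : 0 < ((3:ℝ)^ξ)⁻¹ := by positivity
      have hxx : 0 ≤ ξ * x := mul_nonneg hξ0.le hx.le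
      have h9 : (u-1) * 3 ≤ 2 * (3:ℝ)^ξ := by linarith
      calc (u-1) * (ξ * x * (3 * ((3:ℝ)^ξ)⁻¹))
          = (ξ * x) * (((u-1) * 3) * ((3:ℝ)^ξ)⁻¹) := by ring
        _ ≤ (ξ * x) * ((2 * (3:ℝ)^ξ) * ((3:ℝ)^ξ)⁻¹) := by
            apply mul_le_mul_of_nonneg_left _ hxx
            exact mul_le_mul_of_nonneg_right h9 hinv.le
        _ = 2 * (ξ * x) := by field_simp
    linarith [h7, h8, hB]

/-- The main L-piece estimate. -/
lemma claimT (hξ0 : 0 < ξ) (hξ1 : ξ < 1) {θ x : ℝ} (hθ0 : 0 ≤ θ) (hθ1 : θ ≤ 1) (hx : 0 < x) :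
    ((2:ℝ)^ξ - 1) * (ψ ξ (θ - x) - ψ ξ (θ - 2*x)) ≤ 2 * (ψ ξ (θ + x) - ψ ξ (θ - x)) := by
  set u := (2:ℝ)^ξ with hu
  have hu1 : 1 < u := u_pos hξ0
  have hu2 : u ≤ 2 := u_le_two hξ1.le
  rcases le_or_gt θ x with hI | hI
  · -- Case I : θ ≤ x
    have e1 : ψ ξ (θ - x) = -(F ξ (x - θ)) / 2 := by
      rw [show θ - x = -(x - θ) by ring, psi_neg, psi_of_nonneg hξ0 (by linarith)]; ring
    have e2 : ψ ξ (θ - 2*x) = -(F ξ (2*x - θ)) / 2 := by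
      rw [show θ - 2*x = -(2*x - θ) by ring, psi_neg, psi_of_nonneg hξ0 (by linarith)]; ring
    have e3 : ψ ξ (θ + x) = F ξ (θ + x) / 2 := psi_of_nonneg hξ0 (by linarith)
    have h2 : F ξ (2*x - θ) ≤ u * F ξ (θ + x) := by
      calc F ξ (2*x - θ) ≤ F ξ (2*x) := F_mono hξ0 (by linarith)
        _ ≤ u * F ξ x := F_double hξ0 x
        _ ≤ u * F ξ (θ + x) := by
            have := F_mono hξ0 (show x ≤ θ + x by linarith)
            nlinarith
    rw [e1, e2, e3]
    have hn1 : 0 ≤ F ξ (x - θ) := F_nonneg _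
    have hn2 : 0 ≤ F ξ (θ + x) := F_nonneg _
    have h3 := mul_le_mul_of_nonneg_left h2 (by linarith : (0:ℝ) ≤ u - 1)
    have h4 := mul_le_mul_of_nonneg_right (show u*(u-1) ≤ 2 by nlinarith) hn2
    have h5 := mul_nonneg (by linarith : (0:ℝ) ≤ u - 1) hn1
    nlinarith [h3, h4, h5]
  · -- θ > x; a := θ - x > 0
    have ha0 : 0 < θ - x := by linarith
    have e1 : ψ ξ (θ - x) = F ξ (θ - x) / 2 := psi_of_nonneg hξ0 ha0.le
    have e3 : ψ ξ (θ + x) = F ξ (θ + x) / 2 := psi_of_nonneg hξ0 (by linarith)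
    have hth : θ - x < 1 := by linarith
    have hFa : F ξ (θ - x) = (θ - x) ^ ξ := F_of_mem ha0.le hth.le
    rcases le_or_gt θ (2*x) with hII | hII
    · -- Case II : x < θ ≤ 2x
      have e2 : ψ ξ (θ - 2*x) = -(F ξ (2*x - θ)) / 2 := by
        rw [show θ - 2*x = -(2*x - θ) by ring, psi_neg, psi_of_nonneg hξ0 (by linarith)]; ring
      rw [e1, e2, e3]
      rcases le_or_gt (2*x) 1 with hxa | hxa
      · -- II.a : 2x ≤ 1
        have hFx : F ξ x = x ^ ξ := F_of_mem hx.le (by linarith)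
        have hF2x : F ξ (2*x) = u * F ξ x := by
          rw [F_of_mem (by linarith) hxa, hFx,
            Real.mul_rpow (by norm_num : (0:ℝ) ≤ 2) hx.le]
        have m1 : F ξ (θ - x) ≤ F ξ x := F_mono hξ0 (by linarith)
        have m2 : F ξ (2*x - θ) ≤ F ξ x := F_mono hξ0 (by linarith)
        have m3 : F ξ (2*x) ≤ F ξ (θ + x) := F_mono hξ0 (by linarith)
        have hFxn : 0 ≤ F ξ x := F_nonneg _
        nlinarith [m1, m2, m3, hF2x]
      · -- II.b : 2x > 1
        have hx1 : x < 1 := by linarith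
        have haa : θ - x ≤ 1 - x := by linarith
        have ha12 : θ - x < 1/2 := by linarith
        have hF2 : F ξ (θ + x) = 1 := F_of_ge_one (by linarith)
        have hFxa : F ξ (2*x - θ) = (2*x - θ) ^ ξ := F_of_mem (by linarith) (by linarith)
        have hmm : (2*x - θ) ^ ξ ≤ (1 - 2*(θ-x)) ^ ξ :=
          Real.rpow_le_rpow (by linarith) (by linarith) hξ0.le
        have hC := claimC hξ0 hξ1 ha0.le ha12.le
        rw [hF2, hFa, hFxa]
        nlinarith [hmm, hC]
    · -- Case III : 2x < θ
      have hax : 0 < θ - 2*x := by linarith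
      have e2 : ψ ξ (θ - 2*x) = F ξ (θ - 2*x) / 2 := psi_of_nonneg hξ0 hax.le
      have hFax : F ξ (θ - 2*x) = (θ - 2*x) ^ ξ := F_of_mem hax.le (by linarith)
      rw [e1, e2, e3, hFa, hFax]
      have hxaa : (θ - 2*x : ℝ) = (θ - x) - x := by ring
      rw [hxaa]
      rcases le_or_gt (θ + x) 1 with hcut | hcut
      · -- III.a : no cutoff
        have hFb : F ξ (θ + x) = (θ + x) ^ ξ := F_of_mem (by linarith) hcut
        rw [hFb, show (θ + x : ℝ) = (θ - x) + 2*x by ring]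
        have h := caseIIIa hξ0 hξ1 ha0 hx (by linarith : x < θ - x)
        linarith [h]
      · -- III.b : cutoff at 1
        have hF2 : F ξ (θ + x) = 1 := F_of_ge_one hcut.le
        rw [hF2]
        have h := caseIIIb hξ0 hξ1 ha0 hth hx (by linarith : x < θ - x)
          (by linarith : (θ - x) + x ≤ 1)
        linarith [h]

/-- Main real inequality, θ ≥ 0 case. -/
lemma mri_pos (hξ0 : 0 < ξ) (hξ1 : ξ < 1) {θ x : ℝ} (hθ0 : 0 ≤ θ) (hθ1 : θ ≤ 1) (hx : 0 < x) :
    ψ ξ (θ + 2*x) - ψ ξ (θ - 2*x) ≤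
      ((2:ℝ)^(1+ξ) / ((2:ℝ)^ξ - 1)) * (ψ ξ (θ + x) - ψ ξ (θ - x)) := by
  set u := (2:ℝ)^ξ with hu
  have hu1 : 1 < u := u_pos hξ0
  have hR : ψ ξ (θ + 2*x) - ψ ξ (θ + x) ≤ ψ ξ (θ + x) - ψ ξ (θ - x) := by
    have hm := F_midpoint hξ0 hξ1 hθ0 hx.le
    have e0 : ψ ξ θ = F ξ θ / 2 := psi_of_nonneg hξ0 hθ0
    have e1 : ψ ξ (θ + x) = F ξ (θ + x) / 2 := psi_of_nonneg hξ0 (by linarith)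
    have e2 : ψ ξ (θ + 2*x) = F ξ (θ + 2*x) / 2 := psi_of_nonneg hξ0 (by linarith)
    have hmono : ψ ξ (θ - x) ≤ ψ ξ θ := psi_mono hξ0 (by linarith)
    rw [e1, e2]; rw [e0] at hmono; linarith
  have hL := claimT hξ0 hξ1 hθ0 hθ1 hx
  have h2 : (2:ℝ)^(1+ξ) = 2 * u := by
    rw [hu, Real.rpow_add two_pos, Real.rpow_one]
  rw [h2, div_mul_eq_mul_div, le_div_iff₀ (by linarith : (0:ℝ) < u - 1)]
  nlinarith [hR, hL, mul_le_mul_of_nonneg_left hR (by linarith : (0:ℝ) ≤ u - 1)]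

/-- Main real inequality. -/
lemma mri (hξ0 : 0 < ξ) (hξ1 : ξ < 1) {θ x : ℝ} (hθ0 : -1 ≤ θ) (hθ1 : θ ≤ 1) (hx : 0 < x) :
    ψ ξ (θ + 2*x) - ψ ξ (θ - 2*x) ≤
      ((2:ℝ)^(1+ξ) / ((2:ℝ)^ξ - 1)) * (ψ ξ (θ + x) - ψ ξ (θ - x)) := by
  rcases le_or_gt 0 θ with h | h
  · exact mri_pos hξ0 hξ1 h hθ1 hx
  · have h0 : 0 ≤ -θ := by linarith
    have h1 : -θ ≤ 1 := by linarith
    have := mri_pos hξ0 hξ1 h0 h1 hx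
    rw [show -θ + 2*x = -(θ - 2*x) by ring, show -θ - 2*x = -(θ + 2*x) by ring,
      show -θ + x = -(θ - x) by ring, show -θ - x = -(θ + x) by ring,
      psi_neg, psi_neg, psi_neg, psi_neg] at this
    linarith [this]

lemma F_min_one (t : ℝ) : F ξ (min t 1) = F ξ t := by
  rw [F, F]
  congr 1
  rw [max_comm (min t 1) 0, max_min_distrib_left]
  simp [max_comm]

lemma F_neg_min_one (t : ℝ) : F ξ (-(min t 1)) = F ξ (-t) := by
  rw [F, F]
  congr 1
  rw [neg_inf, sup_assoc]
  norm_num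

lemma psi_min_one (t : ℝ) : ψ ξ (min t 1) = ψ ξ t := by
  rw [ψ, ψ, F_min_one, F_neg_min_one]

lemma psi_max_neg_one (t : ℝ) : ψ ξ (max t (-1)) = ψ ξ t := by
  have : max t (-1) = -(min (-t) 1) := by rw [neg_inf]; simp
  rw [this, psi_neg, psi_min_one, ← psi_neg, neg_neg]

def g (ξ z : ℝ) : ℝ := if z ∈ Icc (-1:ℝ) 1 then ξ/2*|z|^(ξ-1) else 0

variable {ξ : ℝ}




lemma g_nonneg (z : ℝ) (hξ0 : 0 < ξ) : 0 ≤ g ξ z := by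
  rw [g]; split
  · have h : (0:ℝ) ≤ |z| ^ (ξ-1) := Real.rpow_nonneg (abs_nonneg z) _
    positivity
  · exact le_rfl

lemma g_symm (z : ℝ) : g ξ (-z) = g ξ z := by
  rw [g, g, abs_neg]
  congr 1
  simp only [mem_Icc, eq_iff_iff]
  constructor <;> intro h <;> constructor <;> linarith [h.1, h.2]

lemma g_meas (hξ1 : ξ < 1) : Measurable (g ξ) := by
  apply Measurable.ite measurableSet_Icc _ measurable_const
  have hfun : (fun z : ℝ => ξ/2 * |z|^(ξ-1)) =
      fun z => ξ/2 * (if z = 0 then 0 else Real.exp (Real.log |z| * (ξ-1))) := by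
    funext z
    congr 1
    split
    · next h =>
        rw [h, abs_zero, Real.zero_rpow (by intro hc; nlinarith [hc] : ξ-1 ≠ 0)]
    · next h => rw [Real.rpow_def_of_pos (abs_pos.mpr h)]
  rw [hfun]
  exact (Measurable.ite (measurableSet_singleton (0:ℝ)) measurable_const
    (((Real.measurable_log.comp measurable_abs).mul_const _).exp)).const_mul _

lemma g_intOn (hξ0 : 0 < ξ) (hξ1 : ξ < 1) {c : ℝ} (hc : 0 ≤ c) :
    IntegrableOn (g ξ) (Ioc 0 c) volume := by
  have hmaj : IntegrableOn (fun z : ℝ => ξ/2 * z^(ξ-1)) (Ioc 0 c) volume := by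
    have h := (intervalIntegral.intervalIntegrable_rpow' (by linarith : (-1:ℝ) < ξ-1)
      (a := 0) (b := c)).const_mul (ξ/2)
    exact (intervalIntegrable_iff_integrableOn_Ioc_of_le hc).mp h
  apply Integrable.mono hmaj ((g_meas hξ1).aestronglyMeasurable.restrict)
  rw [ae_restrict_iff' measurableSet_Ioc]
  filter_upwards with z hz
  have hz1 : (0:ℝ) ≤ z^(ξ-1) := Real.rpow_nonneg hz.1.le _
  have hg2 : g ξ z ≤ ξ/2 * z^(ξ-1) := by
    rw [g]; split
    · rw [abs_of_nonneg hz.1.le]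
    · exact mul_nonneg (by positivity) hz1
  rw [Real.norm_eq_abs, Real.norm_eq_abs, abs_of_nonneg (g_nonneg z hξ0),
    abs_of_nonneg (mul_nonneg (by positivity : (0:ℝ) ≤ ξ/2) hz1)]
  exact hg2

lemma g_II (hξ0 : 0 < ξ) (hξ1 : ξ < 1) (a b : ℝ) : IntervalIntegrable (g ξ) volume a b := by
  have H : ∀ c : ℝ, IntervalIntegrable (g ξ) volume 0 c := by
    intro c
    rcases le_or_gt 0 c with hc | hc
    · exact (intervalIntegrable_iff_integrableOn_Ioc_of_le hc).mpr (g_intOn hξ0 hξ1 hc)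
    · have h1 : IntervalIntegrable (g ξ) volume (-c) 0 := by
        apply IntervalIntegrable.symm
        exact (intervalIntegrable_iff_integrableOn_Ioc_of_le (by linarith)).mpr
          (g_intOn hξ0 hξ1 (by linarith))
      have h2 := (IntervalIntegrable.iff_comp_neg (f := g ξ) (a := -c) (b := 0)).mp h1
      simp only [neg_neg, neg_zero] at h2
      have h3 : (fun x : ℝ => g ξ (-x)) = g ξ := funext fun x => g_symm x
      rw [h3] at h2
      exact h2.symm
  exact (H a).symm.trans (H b)

lemma J_pos (hξ0 : 0 < ξ) (hξ1 : ξ < 1) {t : ℝ} (ht : 0 ≤ t) :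
    ∫ z in (0:ℝ)..t, g ξ z = F ξ t / 2 := by
  have base : ∀ s : ℝ, 0 ≤ s → s ≤ 1 → ∫ z in (0:ℝ)..s, g ξ z = s ^ ξ / 2 := by
    intro s hs0 hs1
    have hcong : ∀ z ∈ Set.uIoc (0:ℝ) s, g ξ z = ξ/2 * z^(ξ-1) := by
      intro z hz
      rw [uIoc_of_le hs0] at hz
      rw [g, if_pos (by constructor <;> [linarith [hz.1]; linarith [hz.2]]),
        abs_of_nonneg hz.1.le]
    rw [intervalIntegral.integral_congr_ae
      (Filter.Eventually.of_forall (fun z hz => hcong z hz))]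
    rw [intervalIntegral.integral_const_mul, integral_rpow (Or.inl (by linarith))]
    rw [sub_add_cancel, Real.zero_rpow hξ0.ne']
    field_simp
    ring
  rcases le_or_gt t 1 with h1 | h1
  · rw [base t ht h1, F_of_mem ht h1]
  · have hsplit : ∫ z in (0:ℝ)..t, g ξ z =
        (∫ z in (0:ℝ)..1, g ξ z) + ∫ z in (1:ℝ)..t, g ξ z :=
      (intervalIntegral.integral_add_adjacent_intervals (g_II hξ0 hξ1 0 1) (g_II hξ0 hξ1 1 t)).symm
    have htail : ∫ z in (1:ℝ)..t, g ξ z = 0 := by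
      have hcong : ∀ z ∈ Set.uIoc (1:ℝ) t, g ξ z = 0 := by
        intro z hz
        rw [uIoc_of_le h1.le] at hz
        rw [g, if_neg]
        intro hmem
        exact absurd hmem.2 (not_le.mpr hz.1)
      rw [intervalIntegral.integral_congr_ae
        (Filter.Eventually.of_forall (fun z hz => hcong z hz))]
      simp
    rw [hsplit, htail, base 1 zero_le_one le_rfl, F_of_ge_one h1.le, Real.one_rpow]
    ring

lemma Psi_eq (hξ0 : 0 < ξ) (hξ1 : ξ < 1) (s : ℝ) :
    ∫ z in (0:ℝ)..s, g ξ z = ψ ξ s := by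
  rcases le_or_gt 0 s with hs | hs
  · rw [J_pos hξ0 hξ1 hs, ψ, F_of_nonpos hξ0 (by linarith : -s ≤ 0)]
    ring
  · have h1 : ∫ z in (0:ℝ)..s, g ξ z = - ∫ z in s..(0:ℝ), g ξ z :=
      (intervalIntegral.integral_symm _ _)
    have h2 : ∫ z in s..(0:ℝ), g ξ z = ∫ z in (0:ℝ)..(-s), g ξ z := by
      have h3 : (∫ z in (0:ℝ)..(-s), g ξ (-z)) = ∫ z in s..(0:ℝ), g ξ z := by
        have := intervalIntegral.integral_comp_neg (a := (0:ℝ)) (b := -s) (f := g ξ)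
        simpa using this
      rw [← h3]
      congr 1
      exact funext fun z => g_symm z
    rw [h1, h2, J_pos hξ0 hξ1 (by linarith : (0:ℝ) ≤ -s), ψ,
      F_of_nonpos hξ0 hs.le]
    ring

lemma nu_Icc (hξ0 : 0 < ξ) (hξ1 : ξ < 1) {a b : ℝ} (hab : a ≤ b) :
    (MeasureTheory.volume.withDensity fun z => ENNReal.ofReal (g ξ z)) (Icc a b) =
      ENNReal.ofReal (ψ ξ b - ψ ξ a) := by
  rw [withDensity_apply _ measurableSet_Icc]
  have hint : IntegrableOn (g ξ) (Icc a b) volume :=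
    (intervalIntegrable_iff_integrableOn_Icc_of_le hab).mp (g_II hξ0 hξ1 a b)
  rw [← ofReal_integral_eq_lintegral_ofReal hint
    (Filter.Eventually.of_forall (fun z => g_nonneg z hξ0))]
  congr 1
  rw [integral_Icc_eq_integral_Ioc, ← intervalIntegral.integral_of_le hab]
  have hsplit : ∫ z in a..b, g ξ z =
      (∫ z in a..(0:ℝ), g ξ z) + ∫ z in (0:ℝ)..b, g ξ z :=
    (intervalIntegral.integral_add_adjacent_intervals (g_II hξ0 hξ1 a 0) (g_II hξ0 hξ1 0 b)).symm
  have ha : ∫ z in a..(0:ℝ), g ξ z = - ψ ξ a := by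
    rw [← Psi_eq hξ0 hξ1 a, intervalIntegral.integral_symm]
  rw [hsplit, ha, Psi_eq hξ0 hξ1 b]
  ring


end Stmt11

open Stmt11 in
theorem statement_11
    (ξ : ℝ) (hξ0 : 0 < ξ) (hξ1 : ξ < 1)
    -- ν is the probability with density (ξ/2)|z|^{ξ−1} 1_{[−1,1]}(z) w.r.t. Lebesgue measure
    (ν : Measure ℝ)
    (hν : ν = MeasureTheory.volume.withDensity fun z =>
      ENNReal.ofReal (if z ∈ Icc (-1 : ℝ) 1 then ξ / 2 * |z| ^ (ξ - 1) else 0))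
    (θ : ℝ) (hθ : θ ∈ Icc (-1 : ℝ) 1) (x : ℝ) (hx : 0 < x) :
    ν (Icc (max (θ - 2 * x) (-1)) (min (θ + 2 * x) 1)) ≤
      ENNReal.ofReal ((2 : ℝ) ^ (1 + ξ) / ((2 : ℝ) ^ ξ - 1)) *
        ν (Icc (max (θ - x) (-1)) (min (θ + x) 1)) := by
  obtain ⟨hθ1, hθ2⟩ := hθ
  have hκ : (0:ℝ) ≤ (2 : ℝ) ^ (1 + ξ) / ((2 : ℝ) ^ ξ - 1) :=
    div_nonneg (Real.rpow_nonneg (by norm_num) _) (by linarith [u_pos hξ0])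
  have hg : (fun z => ENNReal.ofReal (if z ∈ Icc (-1 : ℝ) 1 then ξ / 2 * |z| ^ (ξ - 1) else 0))
      = fun z => ENNReal.ofReal (g ξ z) := rfl
  have hab2 : max (θ - 2 * x) (-1) ≤ min (θ + 2 * x) 1 :=
    max_le (le_min (by linarith) (by linarith)) (le_min (by linarith) (by norm_num))
  have hab1 : max (θ - x) (-1) ≤ min (θ + x) 1 :=
    max_le (le_min (by linarith) (by linarith)) (le_min (by linarith) (by norm_num))
  rw [hν, hg, nu_Icc hξ0 hξ1 hab2, nu_Icc hξ0 hξ1 hab1,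
    psi_min_one, psi_max_neg_one, psi_min_one, psi_max_neg_one,
    ← ENNReal.ofReal_mul hκ]
  apply ENNReal.ofReal_le_ofReal
  have := mri hξ0 hξ1 hθ1 hθ2 hx
  linarith [this]

end
end

section
/- Let Θ be a convex subset of ℝ^d and ν a probability measure on ℝ^d, supported by Θ, with density g with respect to Lebesgue measure λ satisfying b̲ ≤ g(θ) ≤ b̄ for λ-almost every θ∈Θ (with 0 < b̲ ≤ b̄) and g = 0 outside Θ. Then for every θ∈Θ, every measurable subset 𝓑 of ℝ^d and all r₂ > r₁ > 0: ν(θ + r₂𝓑) ≤ (r₂/r₁)^d·(b̄/b̲)·ν(θ + r₁𝓑), where θ + r𝓑 = {θ + r·u : u∈𝓑}. -/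
open MeasureTheory Real Set
open scoped ENNReal

noncomputable section

theorem statement_18
    (d : ℕ)
    (Θ : Set (Fin d → ℝ)) (hΘconv : Convex ℝ Θ)
    -- ν is a Borel probability on ℝ^d with density g w.r.t. Lebesgue measure λ,
    -- satisfying b̲ ≤ g ≤ b̄ λ-a.e. on Θ and g = 0 outside Θ
    (g : (Fin d → ℝ) → ℝ) (bl bb : ℝ) (hbl : 0 < bl) (hblbb : bl ≤ bb)
    (ν : Measure (Fin d → ℝ))
    (hν : ν = MeasureTheory.volume.withDensity fun θ => ENNReal.ofReal (g θ))
    [IsProbabilityMeasure ν]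
    (hgΘ : ∀ᵐ θ ∂(MeasureTheory.volume.restrict Θ), bl ≤ g θ ∧ g θ ≤ bb)
    (hg0 : ∀ θ ∉ Θ, g θ = 0) :
    ∀ θ ∈ Θ, ∀ 𝓑 : Set (Fin d → ℝ), MeasurableSet 𝓑 →
      ∀ r₁ r₂ : ℝ, 0 < r₁ → r₁ < r₂ →
        ν ((fun u => θ + r₂ • u) '' 𝓑) ≤
          ENNReal.ofReal ((r₂ / r₁) ^ d * (bb / bl)) *
            ν ((fun u => θ + r₁ • u) '' 𝓑) := by
  subst hν
  intro θ hθ B hB r₁ r₂ hr₁ hr₁₂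
  have hr₂ : 0 < r₂ := hr₁.trans hr₁₂
  have hΘnm : NullMeasurableSet Θ (volume : Measure (Fin d → ℝ)) :=
    hΘconv.nullMeasurableSet (μ := volume)
  -- images are measurable
  have himg : ∀ r : ℝ, 0 < r →
      (fun u => θ + r • u) '' B = (fun x => r⁻¹ • (x - θ)) ⁻¹' B := by
    intro r hr
    ext x
    simp only [mem_image, mem_preimage]
    constructor
    · rintro ⟨u, hu, rfl⟩
      simpa [smul_smul, inv_mul_cancel₀ hr.ne'] using hu
    · intro hx
      exact ⟨r⁻¹ • (x - θ), hx, by simp [smul_smul, mul_inv_cancel₀ hr.ne']⟩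
  have hmeas : ∀ r : ℝ, 0 < r → MeasurableSet ((fun u => θ + r • u) '' B) := by
    intro r hr
    rw [himg r hr]
    exact hB.preimage (by fun_prop)
  set A₁ := (fun u => θ + r₁ • u) '' B with hA₁def
  set A₂ := (fun u => θ + r₂ • u) '' B with hA₂def
  have hA₁ : MeasurableSet A₁ := hmeas r₁ hr₁
  have hA₂ : MeasurableSet A₂ := hmeas r₂ hr₂
  -- measure with density equals integral over intersection with Θ
  have hgind : ∀ x, ENNReal.ofReal (g x)
      = Θ.indicator (fun x => ENNReal.ofReal (g x)) x := by
    intro x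
    by_cases hx : x ∈ Θ
    · simp [hx]
    · simp [hx, hg0 x hx]
  have hν_eq : ∀ A : Set (Fin d → ℝ), MeasurableSet A →
      (volume.withDensity fun x => ENNReal.ofReal (g x)) A
        = ∫⁻ x in A ∩ Θ, ENNReal.ofReal (g x) := by
    intro A hA
    rw [withDensity_apply _ hA]
    calc ∫⁻ x in A, ENNReal.ofReal (g x)
        = ∫⁻ x in A, Θ.indicator (fun x => ENNReal.ofReal (g x)) x := by
          simp_rw [← hgind]
      _ = ∫⁻ x in Θ, ENNReal.ofReal (g x) ∂(volume.restrict A) :=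
          lintegral_indicator₀
            (hΘnm.mono_ac Measure.restrict_le_self.absolutelyContinuous) _
      _ = ∫⁻ x in A ∩ Θ, ENNReal.ofReal (g x) := by
          rw [Measure.restrict_restrict₀
            (hΘnm.mono_ac Measure.restrict_le_self.absolutelyContinuous),
            inter_comm]
  -- upper bound on A₂
  have hub : ∫⁻ x in A₂ ∩ Θ, ENNReal.ofReal (g x)
      ≤ ENNReal.ofReal bb * volume (A₂ ∩ Θ) := by
    have hae : ∀ᵐ x ∂(volume.restrict (A₂ ∩ Θ)),
        ENNReal.ofReal (g x) ≤ ENNReal.ofReal bb := by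
      filter_upwards [ae_mono (Measure.restrict_mono inter_subset_right le_rfl) hgΘ]
        with x hx
      exact ENNReal.ofReal_le_ofReal hx.2
    calc ∫⁻ x in A₂ ∩ Θ, ENNReal.ofReal (g x)
        ≤ ∫⁻ _ in A₂ ∩ Θ, ENNReal.ofReal bb := lintegral_mono_ae hae
      _ = ENNReal.ofReal bb * volume (A₂ ∩ Θ) := by
          rw [setLIntegral_const]
  -- lower bound on A₁
  have hlb : ENNReal.ofReal bl * volume (A₁ ∩ Θ)
      ≤ ∫⁻ x in A₁ ∩ Θ, ENNReal.ofReal (g x) := by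
    have hae : ∀ᵐ x ∂(volume.restrict (A₁ ∩ Θ)),
        ENNReal.ofReal bl ≤ ENNReal.ofReal (g x) := by
      filter_upwards [ae_mono (Measure.restrict_mono inter_subset_right le_rfl) hgΘ]
        with x hx
      exact ENNReal.ofReal_le_ofReal hx.1
    calc ENNReal.ofReal bl * volume (A₁ ∩ Θ)
        = ∫⁻ _ in A₁ ∩ Θ, ENNReal.ofReal bl := (setLIntegral_const _ _).symm
      _ ≤ ∫⁻ x in A₁ ∩ Θ, ENNReal.ofReal (g x) := lintegral_mono_ae hae
  -- volume comparison via homothety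
  set c := r₁ / r₂ with hcdef
  have hc0 : 0 < c := div_pos hr₁ hr₂
  have hc1 : c < 1 := (div_lt_one hr₂).2 hr₁₂
  have hsub : AffineMap.homothety θ c '' (A₂ ∩ Θ) ⊆ A₁ ∩ Θ := by
    rintro _ ⟨x, ⟨hx2, hxΘ⟩, rfl⟩
    obtain ⟨u, hu, rfl⟩ := hx2
    constructor
    · refine ⟨u, hu, ?_⟩
      have : c * r₂ = r₁ := div_mul_cancel₀ r₁ hr₂.ne'
      simp only [AffineMap.homothety_apply, vsub_eq_sub, vadd_eq_add]
      rw [add_sub_cancel_left, smul_smul, this]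
      abel
    · have : AffineMap.homothety θ c (θ + r₂ • u)
          = (1 - c) • θ + c • (θ + r₂ • u) := by
        simp only [AffineMap.homothety_apply, vsub_eq_sub, vadd_eq_add]
        module
      rw [this]
      exact hΘconv hθ hxΘ (by linarith) hc0.le (by ring)
  have hhom : volume (AffineMap.homothety θ c '' (A₂ ∩ Θ))
      = ENNReal.ofReal (c ^ d) * volume (A₂ ∩ Θ) := by
    rw [Measure.addHaar_image_homothety]
    congr 2
    rw [Module.finrank_fin_fun, abs_of_nonneg (pow_nonneg hc0.le d)]
  have hvol : volume (A₂ ∩ Θ) ≤ ENNReal.ofReal ((r₂ / r₁) ^ d) * volume (A₁ ∩ Θ) := by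
    have h1 : ENNReal.ofReal (c ^ d) * volume (A₂ ∩ Θ) ≤ volume (A₁ ∩ Θ) := by
      rw [← hhom]; exact measure_mono hsub
    have h2 : ENNReal.ofReal ((r₂ / r₁) ^ d) * (ENNReal.ofReal (c ^ d) * volume (A₂ ∩ Θ))
        = volume (A₂ ∩ Θ) := by
      rw [← mul_assoc, ← ENNReal.ofReal_mul (by positivity)]
      have : (r₂ / r₁) ^ d * c ^ d = 1 := by
        rw [hcdef, ← mul_pow, div_mul_div_comm,
          mul_comm r₂ r₁, div_self (by positivity), one_pow]
      rw [this, ENNReal.ofReal_one, one_mul]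
    calc volume (A₂ ∩ Θ)
        = ENNReal.ofReal ((r₂ / r₁) ^ d) * (ENNReal.ofReal (c ^ d) * volume (A₂ ∩ Θ)) :=
          h2.symm
      _ ≤ ENNReal.ofReal ((r₂ / r₁) ^ d) * volume (A₁ ∩ Θ) := by
          exact mul_le_mul_right h1 _
  -- combine
  rw [hν_eq A₂ hA₂, hν_eq A₁ hA₁]
  calc ∫⁻ x in A₂ ∩ Θ, ENNReal.ofReal (g x)
      ≤ ENNReal.ofReal bb * volume (A₂ ∩ Θ) := hub
    _ ≤ ENNReal.ofReal bb * (ENNReal.ofReal ((r₂ / r₁) ^ d) * volume (A₁ ∩ Θ)) :=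
        mul_le_mul_right hvol _
    _ = ENNReal.ofReal ((r₂ / r₁) ^ d * (bb / bl)) *
          (ENNReal.ofReal bl * volume (A₁ ∩ Θ)) := by
        have hbb : (0:ℝ) ≤ bb := hbl.le.trans hblbb
        rw [← mul_assoc, ← mul_assoc, ← ENNReal.ofReal_mul hbb,
          ← ENNReal.ofReal_mul (mul_nonneg (by positivity) (div_nonneg hbb hbl.le))]
        congr 2
        field_simp
    _ ≤ ENNReal.ofReal ((r₂ / r₁) ^ d * (bb / bl)) *
          ∫⁻ x in A₁ ∩ Θ, ENNReal.ofReal (g x) := mul_le_mul_right hlb _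

end
end

section
/- For all x ≥ 0 and all α ∈ (0,1]: ((2α)∧1)·(x∧x^α) ≤ (1+x)^α − ((1−x)₊)^α ≤ 2^α·(x∧x^α) ≤ 2·(x∧x^α). -/
open Real Set

-- first derivative
lemma aux_hd1 (α : ℝ) (hα0 : 0 < α) {x : ℝ} (hx : x ∈ Ioo (0:ℝ) 1) :
    HasDerivAt (fun y : ℝ => (1 + y) ^ α - (1 - y) ^ α)
      (α * (1 + x) ^ (α - 1) + α * (1 - x) ^ (α - 1)) x := by
  have h1 : HasDerivAt (fun y : ℝ => 1 + y) 1 x := (hasDerivAt_id x).const_add 1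
  have h2 : HasDerivAt (fun y : ℝ => 1 - y) (-1) x := (hasDerivAt_id x).const_sub 1
  have hp1 : (0:ℝ) < 1 + x := by linarith [hx.1]
  have hp2 : (0:ℝ) < 1 - x := by linarith [hx.2]
  have d1 := h1.rpow_const (p := α) (Or.inl hp1.ne')
  have d2 := h2.rpow_const (p := α) (Or.inl hp2.ne')
  refine (d1.sub d2).congr_deriv ?_
  ring

-- first derivative of the derivative function
lemma aux_hd2 (α : ℝ) (hα0 : 0 < α) {x : ℝ} (hx : x ∈ Ioo (0:ℝ) 1) :
    HasDerivAt (fun y : ℝ => α * (1 + y) ^ (α - 1) + α * (1 - y) ^ (α - 1))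
      (α * (α - 1) * (1 + x) ^ (α - 2) - α * (α - 1) * (1 - x) ^ (α - 2)) x := by
  have h1 : HasDerivAt (fun y : ℝ => 1 + y) 1 x := (hasDerivAt_id x).const_add 1
  have h2 : HasDerivAt (fun y : ℝ => 1 - y) (-1) x := (hasDerivAt_id x).const_sub 1
  have hp1 : (0:ℝ) < 1 + x := by linarith [hx.1]
  have hp2 : (0:ℝ) < 1 - x := by linarith [hx.2]
  have d1 := (h1.rpow_const (p := α - 1) (Or.inl hp1.ne')).const_mul α
  have d2 := (h2.rpow_const (p := α - 1) (Or.inl hp2.ne')).const_mul α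
  refine (d1.add d2).congr_deriv ?_
  have : α - 1 - 1 = α - 2 := by ring
  rw [this]
  ring

lemma aux_cont (α : ℝ) (hα0 : 0 < α) :
    Continuous (fun y : ℝ => (1 + y) ^ α - (1 - y) ^ α) := by
  apply Continuous.sub
  · exact (continuous_const.add continuous_id).rpow_const (fun y => Or.inr hα0.le)
  · exact (continuous_const.sub continuous_id).rpow_const (fun y => Or.inr hα0.le)

lemma aux_convex (α : ℝ) (hα0 : 0 < α) (hα1 : α ≤ 1) :
    ConvexOn ℝ (Icc (0:ℝ) 1) (fun y : ℝ => (1 + y) ^ α - (1 - y) ^ α) := by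
  apply convexOn_of_hasDerivWithinAt2_nonneg (convex_Icc 0 1)
    ((aux_cont α hα0).continuousOn)
    (f' := fun y => α * (1 + y) ^ (α - 1) + α * (1 - y) ^ (α - 1))
    (f'' := fun y => α * (α - 1) * (1 + y) ^ (α - 2) - α * (α - 1) * (1 - y) ^ (α - 2))
  · intro y hy
    rw [interior_Icc] at hy
    exact (aux_hd1 α hα0 hy).hasDerivWithinAt
  · intro y hy
    rw [interior_Icc] at hy
    exact (aux_hd2 α hα0 hy).hasDerivWithinAt
  · intro y hy
    rw [interior_Icc] at hy
    have hp1 : (0:ℝ) < 1 + y := by linarith [hy.1]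
    have hp2 : (0:ℝ) < 1 - y := by linarith [hy.2]
    have key : (1 + y) ^ (α - 2) ≤ (1 - y) ^ (α - 2) :=
      Real.rpow_le_rpow_of_nonpos hp2 (by linarith [hy.1]) (by linarith)
    have hfac : 0 ≤ α * (1 - α) := mul_nonneg hα0.le (by linarith)
    nlinarith [mul_nonneg hfac (sub_nonneg.2 key)]

lemma aux_upper (α : ℝ) (hα0 : 0 < α) (hα1 : α ≤ 1) {x : ℝ} (hx0 : 0 ≤ x) (hx1 : x ≤ 1) :
    (1 + x) ^ α - (1 - x) ^ α ≤ 2 ^ α * x := by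
  have hc := aux_convex α hα0 hα1
  have h0 : (0:ℝ) ∈ Icc (0:ℝ) 1 := by constructor <;> norm_num
  have h1 : (1:ℝ) ∈ Icc (0:ℝ) 1 := by constructor <;> norm_num
  have key := hc.2 h0 h1 (by linarith : (0:ℝ) ≤ 1 - x) hx0 (by ring : 1 - x + x = 1)
  norm_num [Real.zero_rpow hα0.ne', Real.one_rpow, smul_eq_mul] at key
  linarith [key]

lemma aux_lower (α : ℝ) (hα0 : 0 < α) (hα1 : α ≤ 1) {x : ℝ} (hx0 : 0 ≤ x) (hx1 : x ≤ 1) :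
    2 * α * x ≤ (1 + x) ^ α - (1 - x) ^ α := by
  have hmono : MonotoneOn (fun y : ℝ => (1 + y) ^ α - (1 - y) ^ α - 2 * α * y) (Icc (0:ℝ) 1) := by
    apply monotoneOn_of_hasDerivWithinAt_nonneg (convex_Icc 0 1)
      (f' := fun y => α * (1 + y) ^ (α - 1) + α * (1 - y) ^ (α - 1) - 2 * α)
    · exact ((aux_cont α hα0).sub (by continuity)).continuousOn
    · intro y hy
      rw [interior_Icc] at hy
      have hlin : HasDerivAt (fun y : ℝ => 2 * α * y) (2 * α) y := by
        simpa using (hasDerivAt_id y).const_mul (2 * α)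
      exact ((aux_hd1 α hα0 hy).sub hlin).hasDerivWithinAt
    · intro y hy
      rw [interior_Icc] at hy
      have hp1 : (0:ℝ) < 1 + y := by linarith [hy.1]
      have hp2 : (0:ℝ) < 1 - y := by linarith [hy.2]
      set a := (1 + y) ^ (α - 1) with ha
      set b := (1 - y) ^ (α - 1) with hb
      have hap : 0 < a := Real.rpow_pos_of_pos hp1 _
      have hbp : 0 < b := Real.rpow_pos_of_pos hp2 _
      have hab : 1 ≤ a * b := by
        rw [ha, hb, ← Real.mul_rpow hp1.le hp2.le]
        exact Real.one_le_rpow_of_pos_of_le_one_of_nonpos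
          (by nlinarith [hy.1, hy.2]) (by nlinarith [hy.1, hy.2]) (by linarith)
      have h2 : 2 ≤ a + b := by nlinarith [sq_nonneg (a - b)]
      nlinarith [hα0.le]
  have h0 : (0:ℝ) ∈ Icc (0:ℝ) 1 := by constructor <;> norm_num
  have hxm : x ∈ Icc (0:ℝ) 1 := ⟨hx0, hx1⟩
  have key := hmono h0 hxm hx0
  norm_num [Real.one_rpow] at key
  linarith [key]

theorem statement_19 (x : ℝ) (hx : 0 ≤ x) (α : ℝ) (hα0 : 0 < α) (hα1 : α ≤ 1) :
    min (2 * α) 1 * min x (x ^ α) ≤ (1 + x) ^ α - max (1 - x) 0 ^ α ∧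
    (1 + x) ^ α - max (1 - x) 0 ^ α ≤ (2 : ℝ) ^ α * min x (x ^ α) ∧
    (2 : ℝ) ^ α * min x (x ^ α) ≤ 2 * min x (x ^ α) := by
  have hminnn : 0 ≤ min x (x ^ α) := le_min hx (Real.rpow_nonneg hx α)
  have third : (2:ℝ) ^ α * min x (x ^ α) ≤ 2 * min x (x ^ α) := by
    apply mul_le_mul_of_nonneg_right _ hminnn
    calc (2:ℝ) ^ α ≤ 2 ^ (1:ℝ) := Real.rpow_le_rpow_of_exponent_le one_le_two hα1
    _ = 2 := Real.rpow_one 2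
  rcases le_total x 1 with hx1 | hx1
  · -- x ≤ 1
    have hmax : max (1 - x) 0 = 1 - x := max_eq_left (by linarith)
    have hmin : min x (x ^ α) = x := by
      rcases eq_or_lt_of_le hx with h | h
      · rw [← h, Real.zero_rpow hα0.ne', min_self]
      · apply min_eq_left
        calc x = x ^ (1:ℝ) := (Real.rpow_one x).symm
        _ ≤ x ^ α := Real.rpow_le_rpow_of_exponent_ge h hx1 hα1
    rw [hmax, hmin]
    rw [hmin] at third
    refine ⟨?_, ?_, third⟩
    · calc min (2 * α) 1 * x ≤ 2 * α * x :=
        mul_le_mul_of_nonneg_right (min_le_left _ _) hx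
      _ ≤ (1 + x) ^ α - (1 - x) ^ α := aux_lower α hα0 hα1 hx hx1
    · exact aux_upper α hα0 hα1 hx hx1
  · -- 1 ≤ x
    have hxpos : (0:ℝ) < x := lt_of_lt_of_le one_pos hx1
    have hmax : max (1 - x) 0 = 0 := max_eq_right (by linarith)
    have hmin : min x (x ^ α) = x ^ α := by
      apply min_eq_right
      calc x ^ α ≤ x ^ (1:ℝ) := Real.rpow_le_rpow_of_exponent_le hx1 hα1
      _ = x := Real.rpow_one x
    rw [hmax, hmin, Real.zero_rpow hα0.ne', sub_zero]
    rw [hmin] at third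
    refine ⟨?_, ?_, third⟩
    · calc min (2 * α) 1 * x ^ α ≤ 1 * x ^ α :=
        mul_le_mul_of_nonneg_right (min_le_right _ _) (Real.rpow_nonneg hx α)
      _ = x ^ α := one_mul _
      _ ≤ (1 + x) ^ α := Real.rpow_le_rpow hx (by linarith) hα0.le
    · calc (1 + x) ^ α ≤ (2 * x) ^ α := Real.rpow_le_rpow (by linarith) (by linarith) hα0.le
      _ = 2 ^ α * x ^ α := Real.mul_rpow (by norm_num) hx
end
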